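/- arXiv:2305.01948 — 6 statements merged into one kernel-verified Lean document; each statement's English description precedes it below -/
import Mathlib

section
/- If G is a k-degenerate graph (every subgraph has a vertex of degree at most k) with at least one edge, then there exists an edge xy in G such that deg(x) ≤ k and at most k neighbors of y have degree strictly greater than k. -/
open SimpleGraph

section Defs

variable {V : Type*} {C : Type*}

/-- A proper edge coloring: edges sharing a vertex receive distinct colors. -/
def IsProperEdgeColoring (G : SimpleGraph V) (c : Sym2 V → C) : Prop :=
  ∀ ⦃u v w : V⦄, G.Adj u v → G.Adj u w → v ≠ w → c s(u, v) ≠ c s(u, w)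

/-- An acyclic edge coloring: proper, and no cycle whose edges use exactly two colors. -/
def IsAcyclicEdgeColoring [DecidableEq C] (G : SimpleGraph V) (c : Sym2 V → C) : Prop :=
  IsProperEdgeColoring G c ∧
    ∀ (v : V) (w : G.Walk v v), w.IsCycle → (w.edges.map c).toFinset.card ≠ 2

/-- The acyclic chromatic index `a'(G)`: least `n` admitting an acyclic edge
coloring with `n` colors. -/
noncomputable def acyclicChromaticIndex (G : SimpleGraph V) : ℕ :=
  sInf {n | ∃ c : Sym2 V → Fin n, IsAcyclicEdgeColoring G c}

/-- The chromatic index `χ'(G)`: least `n` admitting a proper edge coloring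
with `n` colors. -/
noncomputable def chromaticIndex (G : SimpleGraph V) : ℕ :=
  sInf {n | ∃ c : Sym2 V → Fin n, IsProperEdgeColoring G c}

/-- `G` is `k`-degenerate: every (induced sub)graph has a vertex of degree at most `k`. -/
def Degenerate (G : SimpleGraph V) [DecidableRel G.Adj] (k : ℕ) : Prop :=
  ∀ s : Finset V, s.Nonempty → ∃ v ∈ s, (s.filter (fun u => G.Adj v u)).card ≤ k

/-- A path all of whose edges are colored `α` or `β` (alternation is automatic
for a proper coloring with `α ≠ β`). -/
def IsBichromaticPath (G : SimpleGraph V) (c : Sym2 V → C) (α β : C)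
    {u v : V} (p : G.Walk u v) : Prop :=
  p.IsPath ∧ ∀ e ∈ p.edges, c e = α ∨ c e = β

/-- A maximal `(α,β)`-bichromatic path: it cannot be extended at either end. -/
def IsMaximalBichromaticPath (G : SimpleGraph V) (c : Sym2 V → C) (α β : C)
    {u v : V} (p : G.Walk u v) : Prop :=
  IsBichromaticPath G c α β p ∧
    (¬ ∃ (w : V) (h : G.Adj w u), IsBichromaticPath G c α β (Walk.cons h p)) ∧
    (¬ ∃ (w : V) (h : G.Adj v w), IsBichromaticPath G c α β (p.concat h))

/-- An `(η,γ,uv)`-critical path: a maximal `(η,γ)`-bichromatic path from `u` to `v`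
starting and ending with an edge colored `η`. -/
def IsCriticalPath (G : SimpleGraph V) (c : Sym2 V → C) (η γ : C)
    {u v : V} (p : G.Walk u v) : Prop :=
  IsMaximalBichromaticPath G c η γ p ∧
    ∃ hne : p.edges ≠ [], c (p.edges.head hne) = η ∧ c (p.edges.getLast hne) = η

end Defs

theorem special_edge_of_degenerate {V : Type*} [Fintype V] (G : SimpleGraph V)
    [DecidableRel G.Adj] (k : ℕ) (hdeg : Degenerate G k) (hne : ∃ x y, G.Adj x y) :
    ∃ x y : V, G.Adj x y ∧ G.degree x ≤ k ∧
      ((G.neighborFinset y).filter (fun z => k < G.degree z)).card ≤ k := by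
  classical
  by_cases hS : ∃ v, k < G.degree v
  · set S : Finset V := Finset.univ.filter (fun v => k < G.degree v) with hSdef
    have hSne : S.Nonempty := by
      obtain ⟨v, hv⟩ := hS
      exact ⟨v, by simp [hSdef, hv]⟩
    obtain ⟨v, hvS, hcard⟩ := hdeg S hSne
    have hvdeg : k < G.degree v := by simpa [hSdef] using hvS
    have hfilt : (G.neighborFinset v).filter (fun z => k < G.degree z)
        = S.filter (fun u => G.Adj v u) := by
      ext u
      simp [hSdef, and_comm]
    obtain ⟨x, hx, hxdeg⟩ : ∃ x ∈ G.neighborFinset v, G.degree x ≤ k := by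
      by_contra h
      push_neg at h
      have hsub : G.neighborFinset v ⊆ S.filter (fun u => G.Adj v u) := by
        intro u hu
        have := h u hu
        simp only [mem_neighborFinset] at hu
        simp [hSdef, this, hu]
      have := Finset.card_le_card hsub
      rw [G.card_neighborFinset_eq_degree] at this
      omega
    refine ⟨x, v, ?_, hxdeg, ?_⟩
    · exact (G.mem_neighborFinset v x).mp hx |>.symm
    · rw [hfilt]; exact hcard
  · push_neg at hS
    obtain ⟨x, y, hxy⟩ := hne
    refine ⟨x, y, hxy, hS x, ?_⟩
    have : (G.neighborFinset y).filter (fun z => k < G.degree z) = ∅ := by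
      apply Finset.filter_false_of_mem
      intro z _
      simpa using hS z
    simp [this]
end

section
/- Let G be a graph, let g be an acyclic edge coloring of G minus an edge xy, and let S be the set of neighbors u of x (other than y) such that the color g(xu) also appears on some edge incident to y. Let E* be the set of edges incident to at least one vertex in S ∪ {x, y}. Then any color not appearing on any edge of E* can be assigned to xy so that the resulting coloring of G is a proper acyclic edge coloring. -/
open SimpleGraph

private lemma path_first_edge {V : Type*} [DecidableEq V] {G : SimpleGraph V} {x y v : V}
    (p : G.Walk x v) (hp : p.IsPath) (hm : s(x, y) ∈ p.edges) :
    ∃ (h : G.Adj x y) (q : G.Walk y v), p = Walk.cons h q := by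
  cases p with
  | nil => simp at hm
  | cons h' q =>
    rw [Walk.edges_cons, List.mem_cons] at hm
    rcases hm with hm | hm
    · obtain rfl := Sym2.congr_right.mp hm.symm
      exact ⟨h', q, rfl⟩
    · exfalso
      have hx : x ∈ q.support := Walk.fst_mem_support_of_mem_edges q hm
      exact (Walk.cons_isPath_iff _ _ |>.mp hp).2 hx

private lemma cycle_first_edge {V : Type*} [DecidableEq V] {G : SimpleGraph V} {x y : V}
    (w : G.Walk x x) (hw : w.IsCycle) (hm : s(x, y) ∈ w.edges) :
    ∃ (h : G.Adj x y) (r : G.Walk y x),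
      (Walk.cons h r).IsCycle ∧ (Walk.cons h r).edges.Perm w.edges := by
  cases w with
  | nil => simp at hm
  | @cons _ b _ h' q =>
    obtain ⟨hq, hnb⟩ := (Walk.cons_isCycle_iff q h').mp hw
    rw [Walk.edges_cons, List.mem_cons] at hm
    rcases hm with hm | hm
    · obtain rfl := Sym2.congr_right.mp hm.symm
      exact ⟨h', q, hw, List.Perm.refl _⟩
    · -- s(x,y) ∈ q.edges, q : Walk b x
      have hby : b ≠ y := by
        rintro rfl; exact hnb hm
      have hqr : s(x, y) ∈ q.reverse.edges := by
        rw [Walk.edges_reverse, List.mem_reverse]; exact hm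
      obtain ⟨h2, q2, heq⟩ := path_first_edge q.reverse hq.reverse hqr
      have hxq2 : x ∉ q2.support := by
        have := hq.reverse
        rw [heq, Walk.cons_isPath_iff] at this
        exact this.2
      have hq2p : q2.IsPath := by
        have := hq.reverse
        rw [heq, Walk.cons_isPath_iff] at this
        exact this.1
      refine ⟨h2, q2.concat h'.symm, ?_, ?_⟩
      · rw [Walk.cons_isCycle_iff]
        constructor
        · rw [← Walk.isPath_reverse_iff, Walk.reverse_concat]
          rw [Walk.cons_isPath_iff]
          refine ⟨hq2p.reverse, ?_⟩
          rw [Walk.support_reverse, List.mem_reverse]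
          exact hxq2
        · rw [Walk.edges_concat, List.concat_eq_append, List.mem_append]
          rintro (hc | hc)
          · -- s(x,y) ∈ q2.edges, but q.reverse trail: edges nodup
            have : q.reverse.edges.Nodup := hq.reverse.isTrail.edges_nodup
            rw [heq, Walk.edges_cons] at this
            exact this.notMem hc
          · simp only [List.mem_singleton] at hc
            rw [Sym2.eq_iff] at hc
            rcases hc with ⟨-, hc2⟩ | ⟨-, hc2⟩
            · exact h2.ne' hc2
            · exact hby hc2.symm
      · -- edges perm
        have hform : Walk.cons h2 (q2.concat h'.symm) = (Walk.cons h' q).reverse := by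
          rw [Walk.reverse_cons, ← Walk.concat_eq_append, heq, Walk.concat_cons]
        rw [hform, Walk.edges_reverse]
        exact List.reverse_perm _

theorem color_outside_Estar_valid {V : Type*} [DecidableEq V] (G : SimpleGraph V)
    {x y : V} (hxy : G.Adj x y) (g : Sym2 V → ℕ)
    (hg : IsAcyclicEdgeColoring (G.deleteEdges {s(x, y)}) g) (γ : ℕ)
    (hγ : ∀ e ∈ (G.deleteEdges {s(x, y)}).edgeSet,
      (∃ w, w ∈ e ∧ (w = x ∨ w = y ∨
        ((G.deleteEdges {s(x, y)}).Adj x w ∧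
          ∃ v', (G.deleteEdges {s(x, y)}).Adj y v' ∧ g s(x, w) = g s(y, v')))) →
      g e ≠ γ) :
    IsAcyclicEdgeColoring G (Function.update g s(x, y) γ) := by
  classical
  set G' := G.deleteEdges {s(x, y)} with hG'
  set c := Function.update g s(x, y) γ with hc
  have hcg : ∀ e, e ≠ s(x, y) → c e = g e := fun e he => Function.update_of_ne he _ _
  have hcxy : c s(x, y) = γ := Function.update_self _ _ _
  have hG'adj : ∀ {a b : V}, G.Adj a b → s(a, b) ≠ s(x, y) → G'.Adj a b := by
    intro a b hab hne
    rw [hG', SimpleGraph.deleteEdges_adj]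
    exact ⟨hab, by simpa using hne⟩
  have hγ' : ∀ {a b : V}, G'.Adj a b →
      (a = x ∨ a = y ∨ (G'.Adj x a ∧ ∃ v', G'.Adj y v' ∧ g s(x, a) = g s(y, v'))) →
      g s(a, b) ≠ γ := by
    intro a b hab hcond
    exact hγ s(a, b) ((SimpleGraph.mem_edgeSet G').mpr hab) ⟨a, Sym2.mem_mk_left a b, hcond⟩
  constructor
  · intro u v w huv huw hvw
    by_cases h1 : s(u, v) = s(x, y) <;> by_cases h2 : s(u, w) = s(x, y)
    · exact absurd (Sym2.congr_right.mp (h1.trans h2.symm)) hvw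
    · rw [h1, hcxy, hcg _ h2]
      have huxy : u = x ∨ u = y := by
        rw [Sym2.eq_iff] at h1
        rcases h1 with ⟨h, -⟩ | ⟨h, -⟩
        exacts [Or.inl h, Or.inr h]
      intro hcontra
      exact hγ' (hG'adj huw h2)
        (huxy.elim Or.inl (fun h => Or.inr (Or.inl h))) hcontra.symm
    · rw [h2, hcxy, hcg _ h1]
      have huxy : u = x ∨ u = y := by
        rw [Sym2.eq_iff] at h2
        rcases h2 with ⟨h, -⟩ | ⟨h, -⟩
        exacts [Or.inl h, Or.inr h]
      exact hγ' (hG'adj huv h1)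
        (huxy.elim Or.inl (fun h => Or.inr (Or.inl h)))
    · rw [hcg _ h1, hcg _ h2]
      exact hg.1 (hG'adj huv h1) (hG'adj huw h2) hvw
  · intro v w hw hcard
    by_cases hmem : s(x, y) ∈ w.edges
    · -- the cycle uses the edge xy
      have hx : x ∈ w.support := Walk.fst_mem_support_of_mem_edges w hmem
      have hw1c : (w.rotate x hx).IsCycle := hw.rotate hx
      have hperm1 : (w.rotate x hx).edges.Perm w.edges := (w.rotate_edges x hx).perm
      have hmem1 : s(x, y) ∈ (w.rotate x hx).edges := hperm1.mem_iff.mpr hmem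
      obtain ⟨h, r, hcyc, hperm2⟩ := cycle_first_edge (w.rotate x hx) hw1c hmem1
      obtain ⟨hrpath, hrn⟩ := (Walk.cons_isCycle_iff r h).mp hcyc
      have hperm : ((Walk.cons h r).edges.map c).Perm (w.edges.map c) :=
        (hperm2.trans hperm1).map c
      have hcard2 : ((Walk.cons h r).edges.map c).toFinset.card = 2 := by
        rw [List.toFinset_eq_of_perm _ _ hperm]; exact hcard
      have hmapr : r.edges.map c = r.edges.map g :=
        List.map_congr_left (fun e he => hcg e (fun hh => hrn (hh ▸ he)))
      have hlist : (Walk.cons h r).edges.map c = γ :: r.edges.map g := by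
        rw [Walk.edges_cons, List.map_cons, hcxy, hmapr]
      rw [hlist] at hcard2
      obtain ⟨v0, h0, r1, hr0⟩ := Walk.exists_eq_cons_of_ne hxy.ne' r
      obtain ⟨u0, h2, s0, hr2⟩ := Walk.exists_eq_cons_of_ne hxy.ne r.reverse
      cases s0 with
      | nil =>
        apply hrn
        rw [← List.mem_reverse, ← Walk.edges_reverse, hr2]
        simp
      | @cons _ t _ h1 s2 =>
        have hmemux : s(x, u0) ∈ r.edges := by
          rw [← List.mem_reverse, ← Walk.edges_reverse, hr2]; simp
        have hmemut : s(u0, t) ∈ r.edges := by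
          rw [← List.mem_reverse, ← Walk.edges_reverse, hr2]; simp
        have hmemyv : s(y, v0) ∈ r.edges := by rw [hr0]; simp
        have huy : u0 ≠ y := fun hh => hrn (hh ▸ hmemux)
        have hvx : v0 ≠ x := by
          rintro rfl
          apply hrn
          rw [Sym2.eq_swap]
          exact hmemyv
        have hsutne : s(u0, t) ≠ s(x, y) := fun hh => hrn (hh ▸ hmemut)
        have htx : t ≠ x := by
          have hrev : r.reverse.IsPath := hrpath.reverse
          rw [hr2, Walk.cons_isPath_iff] at hrev
          intro hh
          apply hrev.2
          rw [Walk.support_cons]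
          exact List.mem_cons_of_mem _ (hh ▸ s2.start_mem_support)
        have hxu' : G'.Adj x u0 := hG'adj h2 (fun hh => huy (Sym2.congr_right.mp hh))
        have hyv' : G'.Adj y v0 := by
          refine hG'adj h0 (fun hh => ?_)
          rw [Sym2.eq_iff] at hh
          rcases hh with ⟨hh1, -⟩ | ⟨-, hh2⟩
          · exact hxy.ne hh1.symm
          · exact hvx hh2
        have hut' : G'.Adj u0 t := hG'adj h1 hsutne
        have hux' : G'.Adj u0 x := hxu'.symm
        have hγT : γ ∈ (γ :: r.edges.map g).toFinset := by simp
        have hαT : g s(x, u0) ∈ (γ :: r.edges.map g).toFinset := by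
          simp only [List.toFinset_cons, Finset.mem_insert, List.mem_toFinset]
          exact Or.inr (List.mem_map_of_mem (f := g) hmemux)
        have hαγ : g s(x, u0) ≠ γ := hγ' hxu' (Or.inl rfl)
        have hTeq : (γ :: r.edges.map g).toFinset = {γ, g s(x, u0)} := by
          refine (Finset.eq_of_subset_of_card_le ?_ ?_).symm
          · intro z hz
            rcases Finset.mem_insert.mp hz with rfl | hz
            · exact hγT
            · exact Finset.mem_singleton.mp hz ▸ hαT
          · rw [hcard2, Finset.card_pair (Ne.symm hαγ)]
        have hval : ∀ {a b : V}, s(a, b) ∈ r.edges → g s(a, b) ≠ γ →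
            g s(a, b) = g s(x, u0) := by
          intro a b hm hne
          have hmem' : g s(a, b) ∈ (γ :: r.edges.map g).toFinset := by
            simp only [List.toFinset_cons, Finset.mem_insert, List.mem_toFinset]
            exact Or.inr (List.mem_map_of_mem (f := g) hm)
          rw [hTeq] at hmem'
          rcases Finset.mem_insert.mp hmem' with hh | hh
          · exact absurd hh hne
          · exact Finset.mem_singleton.mp hh
        have hyvval : g s(y, v0) = g s(x, u0) :=
          hval hmemyv (hγ' hyv' (Or.inr (Or.inl rfl)))
        have hutval : g s(u0, t) = g s(x, u0) :=
          hval hmemut (hγ' hut' (Or.inr (Or.inr ⟨hxu', v0, hyv', hyvval.symm⟩)))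
        have hprop := hg.1 hut' hux' htx
        rw [hutval] at hprop
        exact hprop (congrArg g Sym2.eq_swap)
    · -- the cycle avoids the edge xy
      have hE : ∀ e ∈ w.edges, e ∈ G'.edgeSet := by
        intro e he
        rw [hG', SimpleGraph.edgeSet_deleteEdges]
        refine ⟨w.edges_subset_edgeSet he, ?_⟩
        intro hh
        rw [Set.mem_singleton_iff] at hh
        exact hmem (hh ▸ he)
      have hcyc := hg.2 v (w.transfer G' hE) (hw.transfer hE)
      rw [Walk.edges_transfer] at hcyc
      apply hcyc
      have hmapeq : w.edges.map g = w.edges.map c :=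
        List.map_congr_left (fun e he => (hcg e (fun hh => hmem (hh ▸ he))).symm)
      rw [hmapeq]
      exact hcard
end

section
/- Let G be a k-degenerate graph with k ≥ 4, maximum degree Δ, and let p = ⌈((k+1)/2)Δ⌉ + 1. Let xy be an edge with deg(x) ≤ k, and let g be an acyclic edge coloring of G \ xy with p colors such that no color in {1,...,p} is valid for xy. Let S = {u ∈ N(x)\{y} : g(xu) appears on an edge incident to y}. Then |S| > (k−3)/2. -/
open SimpleGraph

section Helpers

variable {V : Type*} {G : SimpleGraph V}

lemma walk_cons_of_length_pos {a b : V} (p : G.Walk a b) (hp : 0 < p.length) :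
    ∃ (u : V) (h : G.Adj a u) (q : G.Walk u b), p = Walk.cons h q := by
  cases p with
  | nil => simp at hp
  | cons h q => exact ⟨_, h, q, rfl⟩

lemma walk_cons_of_ne {a b : V} (p : G.Walk a b) (hab : a ≠ b) :
    ∃ (u : V) (h : G.Adj a u) (q : G.Walk u b), p = Walk.cons h q := by
  cases p with
  | nil => exact absurd rfl hab
  | cons h q => exact ⟨_, h, q, rfl⟩

lemma first_edge_of_path {a b : V} {p : G.Walk a b} (hp : p.IsPath) {e : Sym2 V}
    (he : e ∈ p.edges) (ha : a ∈ e) :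
    ∃ (u : V) (h : G.Adj a u) (q : G.Walk u b),
      p = Walk.cons h q ∧ e = s(a, u) ∧ a ∉ q.support ∧ q.IsPath := by
  cases p with
  | nil => simp at he
  | cons h q =>
    rw [Walk.cons_isPath_iff] at hp
    rw [Walk.edges_cons, List.mem_cons] at he
    rcases he with he | he
    · exact ⟨_, h, q, rfl, he, hp.2, hp.1⟩
    · exfalso
      obtain ⟨z, rfl⟩ := Sym2.mem_iff_exists.mp ha
      exact hp.2 (q.fst_mem_support_of_mem_edges he)

/-- From a cycle at `x` containing the edge `s(x,y)`, extract a path from `y` to `x`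
of length at least 2 all of whose edges lie in the cycle. -/
lemma exists_path_of_cycle {x y : V} {w : G.Walk x x} (hw : w.IsCycle)
    (he : s(x, y) ∈ w.edges) :
    ∃ P : G.Walk y x, P.IsPath ∧ 2 ≤ P.length ∧ ∀ e ∈ P.edges, e ∈ w.edges := by
  have hlen3 := hw.three_le_length
  obtain ⟨a, h, q, rfl⟩ := walk_cons_of_length_pos w (by omega)
  have hcyc := (Walk.cons_isCycle_iff q h).mp hw
  rw [Walk.length_cons] at hlen3
  rw [Walk.edges_cons, List.mem_cons] at he
  rcases he with he1 | he2
  · -- the first edge of the cycle is s(x,y), so a = y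
    obtain rfl : y = a := Sym2.congr_right.mp he1
    exact ⟨q, hcyc.1, by omega, fun e hee => by
      rw [Walk.edges_cons]; exact List.mem_cons_of_mem _ hee⟩
  · -- s(x,y) lies in the tail q
    have hay : a ≠ y := by
      rintro rfl
      exact hcyc.2 he2
    have hqr : q.reverse.IsPath := hcyc.1.reverse
    have her : s(x, y) ∈ q.reverse.edges := by
      rw [Walk.edges_reverse, List.mem_reverse]; exact he2
    obtain ⟨u', h', Q, hq1, hq2, hq3, hq4⟩ :=
      first_edge_of_path hqr her (Sym2.mem_mk_left x y)
    obtain rfl : y = u' := Sym2.congr_right.mp hq2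
    refine ⟨Q.concat h.symm, ?_, ?_, ?_⟩
    · have hQn : Q.support.Nodup := (Walk.isPath_def _).mp hq4
      rw [Walk.isPath_def, Walk.support_concat]
      simp [List.nodup_append, hQn, hq3]
      exact fun a ha hax => hq3 (hax ▸ ha)
    · have hQ0 : Q.length ≠ 0 := fun h0 => hay (Walk.eq_of_length_eq_zero h0).symm
      rw [Walk.length_concat]; omega
    · intro e hee
      rw [Walk.edges_concat, List.concat_eq_append, List.mem_append] at hee
      rcases hee with hee | hee
      · have hq : e ∈ q.reverse.edges := by
          rw [hq1, Walk.edges_cons]; exact List.mem_cons_of_mem _ hee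
        rw [Walk.edges_reverse, List.mem_reverse] at hq
        rw [Walk.edges_cons]; exact List.mem_cons_of_mem _ hq
      · rw [List.mem_singleton] at hee
        subst hee
        rw [Walk.edges_cons, Sym2.eq_swap]
        exact List.mem_cons_self

/-- From a bichromatic path from `y` to `x` (with respect to a proper coloring in which
`s(x,y)` has color `γ`), extract the key vertices `u`, `t`, `v'`. -/
lemma extract_bichromatic {C : Type*} {c : Sym2 V → C}
    (hcp : IsProperEdgeColoring G c) {x y : V} (hxy : G.Adj x y) {γ β : C}
    (hγ : c s(x, y) = γ) {P : G.Walk y x} (hPpath : P.IsPath) (hPlen : 2 ≤ P.length)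
    (hcol : ∀ e ∈ P.edges, c e = γ ∨ c e = β) :
    ∃ u t v' : V, G.Adj x u ∧ u ≠ y ∧ G.Adj u t ∧ t ≠ x ∧
      G.Adj y v' ∧ v' ≠ x ∧ c s(x, u) = β ∧ c s(y, v') = β ∧ c s(u, t) = γ := by
  have hyx : y ≠ x := hxy.ne'
  -- the end of P at y
  obtain ⟨v', hyv, P2, hP2⟩ := walk_cons_of_ne P hyx
  have hv'x : v' ≠ x := by
    rintro rfl
    rw [hP2, Walk.cons_isPath_iff] at hPpath
    have : P2 = Walk.nil := Walk.isPath_iff_eq_nil.mp hPpath.1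
    rw [hP2, this] at hPlen
    simp at hPlen
  have hevy : s(y, v') ∈ P.edges := by
    rw [hP2, Walk.edges_cons]; exact List.mem_cons_self
  have hcyv : c s(y, v') = β := by
    rcases hcol _ hevy with hcc | hcc
    · exfalso
      have h2 := hcp hxy.symm hyv (Ne.symm hv'x)
      rw [Sym2.eq_swap, hγ] at h2
      exact h2 hcc.symm
    · exact hcc
  -- the end of P at x, via the reverse
  have hRpath : P.reverse.IsPath := hPpath.reverse
  obtain ⟨u, hxu, Q, hQ⟩ := walk_cons_of_ne P.reverse (Ne.symm hyx)
  have hQpath : Q.IsPath ∧ x ∉ Q.support := by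
    rw [hQ, Walk.cons_isPath_iff] at hRpath; exact ⟨hRpath.1, hRpath.2⟩
  have huy : u ≠ y := by
    rintro rfl
    have hQnil : Q = Walk.nil := Walk.isPath_iff_eq_nil.mp hQpath.1
    have : P.reverse.length = 1 := by rw [hQ, hQnil]; simp
    rw [Walk.length_reverse] at this
    omega
  obtain ⟨t, hut, Q2, hQ2⟩ := walk_cons_of_ne Q huy
  have htx : t ≠ x := by
    rintro rfl
    exact hQpath.2 (by
      rw [hQ2, Walk.support_cons]
      exact List.mem_cons_of_mem _ Q2.start_mem_support)
  have hexu : s(x, u) ∈ P.edges := by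
    have hm : s(x, u) ∈ P.reverse.edges := by
      rw [hQ, Walk.edges_cons]; exact List.mem_cons_self
    rwa [Walk.edges_reverse, List.mem_reverse] at hm
  have heut : s(u, t) ∈ P.edges := by
    have hm : s(u, t) ∈ P.reverse.edges := by
      rw [hQ, Walk.edges_cons, hQ2, Walk.edges_cons]
      exact List.mem_cons_of_mem _ List.mem_cons_self
    rwa [Walk.edges_reverse, List.mem_reverse] at hm
  have hcxu : c s(x, u) = β := by
    rcases hcol _ hexu with hcc | hcc
    · exfalso
      have h2 := hcp hxy hxu (Ne.symm huy)
      rw [hγ] at h2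
      exact h2 hcc.symm
    · exact hcc
  have hcut : c s(u, t) = γ := by
    rcases hcol _ heut with hcc | hcc
    · exact hcc
    · exfalso
      have h2 := hcp hxu.symm hut (Ne.symm htx)
      rw [Sym2.eq_swap, hcxu] at h2
      exact h2 hcc.symm
  exact ⟨u, t, v', hxu, huy, hut, htx, hyv, hv'x, hcxu, hcyv, hcut⟩

end Helpers

theorem S_large_of_no_valid_color {V : Type*} [Fintype V] [DecidableEq V]
    (G : SimpleGraph V) [DecidableRel G.Adj] (k : ℕ) (hk : 4 ≤ k)
    (hdeg : Degenerate G k) {x y : V} (hxy : G.Adj x y) (hdx : G.degree x ≤ k)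
    (g : Sym2 V → Fin ((⌈((k + 1 : ℚ) / 2) * (G.maxDegree : ℚ)⌉).toNat + 1))
    (hg : IsAcyclicEdgeColoring (G.deleteEdges {s(x, y)}) g)
    (hinvalid : ∀ γ, ¬ IsAcyclicEdgeColoring G (Function.update g s(x, y) γ)) :
    ((k : ℚ) - 3) / 2 <
      ({u : V | (G.deleteEdges {s(x, y)}).Adj x u ∧
        ∃ v', (G.deleteEdges {s(x, y)}).Adj y v' ∧ g s(x, u) = g s(y, v')}).ncard := by
  classical
  have hxney : x ≠ y := hxy.ne
  set D := G.deleteEdges {s(x, y)} with hD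
  set Ny : Finset V := Finset.univ.filter (fun v' => D.Adj y v') with hNy
  set Fy : Finset (Fin ((⌈((k + 1 : ℚ) / 2) * (G.maxDegree : ℚ)⌉).toNat + 1)) :=
    Ny.image (fun v' => g s(y, v')) with hFy
  set Sf : Finset V := Finset.univ.filter (fun u => D.Adj x u ∧ g s(x, u) ∈ Fy) with hSf
  have hset : {u : V | D.Adj x u ∧ ∃ v', D.Adj y v' ∧ g s(x, u) = g s(y, v')} = ↑Sf := by
    ext u
    constructor
    · rintro ⟨h1, v', h2, h3⟩
      refine Finset.mem_coe.mpr (Finset.mem_filter.mpr ⟨Finset.mem_univ _, h1, ?_⟩)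
      exact Finset.mem_image.mpr ⟨v', Finset.mem_filter.mpr ⟨Finset.mem_univ _, h2⟩, h3.symm⟩
    · intro hu
      obtain ⟨-, h1, h2⟩ := Finset.mem_filter.mp (Finset.mem_coe.mp hu)
      obtain ⟨v', hv', h3⟩ := Finset.mem_image.mp h2
      obtain ⟨-, h4⟩ := Finset.mem_filter.mp hv'
      exact ⟨h1, v', h4, h3.symm⟩
  rw [hset, Set.ncard_coe_finset]
  by_contra hcon
  push_neg at hcon
  -- the "bad" colors
  set Fx : Finset (Fin ((⌈((k + 1 : ℚ) / 2) * (G.maxDegree : ℚ)⌉).toNat + 1)) :=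
    (Finset.univ.filter (fun u => D.Adj x u)).image (fun u => g s(x, u)) with hFx
  set Fu : V → Finset (Fin ((⌈((k + 1 : ℚ) / 2) * (G.maxDegree : ℚ)⌉).toNat + 1)) :=
    fun u => (Finset.univ.filter (fun t => D.Adj u t)).image (fun t => g s(u, t)) with hFu
  set Bad : Finset (Fin ((⌈((k + 1 : ℚ) / 2) * (G.maxDegree : ℚ)⌉).toNat + 1)) :=
    (Fx ∪ Fy) ∪ Sf.biUnion Fu with hBadDef
  -- cardinality bounds
  have hΔx : Fx.card + 1 ≤ G.maxDegree := by
    have hsub : Finset.univ.filter (fun u => D.Adj x u) ⊆ (G.neighborFinset x).erase y := by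
      intro u hu
      rw [Finset.mem_filter] at hu
      have h2 := hu.2
      rw [hD, deleteEdges_adj, Set.mem_singleton_iff] at h2
      refine Finset.mem_erase.mpr ⟨fun hh => h2.2 (by rw [hh]), (G.mem_neighborFinset x u).mpr h2.1⟩
    have h1 : ((G.neighborFinset x).erase y).card = G.degree x - 1 :=
      Finset.card_erase_of_mem ((G.mem_neighborFinset x y).mpr hxy)
    have h2 : Fx.card ≤ G.degree x - 1 := by
      rw [hFx, ← h1]
      exact le_trans Finset.card_image_le (Finset.card_le_card hsub)
    have h3 : 1 ≤ G.degree x := by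
      rw [← G.card_neighborFinset_eq_degree]
      exact Finset.card_pos.mpr ⟨y, (G.mem_neighborFinset x y).mpr hxy⟩
    have h4 := G.degree_le_maxDegree x
    omega
  have hΔy : Fy.card + 1 ≤ G.maxDegree := by
    have hsub : Ny ⊆ (G.neighborFinset y).erase x := by
      intro u hu
      rw [hNy, Finset.mem_filter] at hu
      have h2 := hu.2
      rw [hD, deleteEdges_adj, Set.mem_singleton_iff] at h2
      refine Finset.mem_erase.mpr ⟨fun hh => h2.2 (by rw [hh, Sym2.eq_swap]),
        (G.mem_neighborFinset y u).mpr h2.1⟩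
    have h1 : ((G.neighborFinset y).erase x).card = G.degree y - 1 :=
      Finset.card_erase_of_mem ((G.mem_neighborFinset y x).mpr hxy.symm)
    have h2 : Fy.card ≤ G.degree y - 1 := by
      rw [hFy, ← h1]
      exact le_trans Finset.card_image_le (Finset.card_le_card hsub)
    have h3 : 1 ≤ G.degree y := by
      rw [← G.card_neighborFinset_eq_degree]
      exact Finset.card_pos.mpr ⟨x, (G.mem_neighborFinset y x).mpr hxy.symm⟩
    have h4 := G.degree_le_maxDegree y
    omega
  have hΔu : ∀ u : V, (Fu u).card ≤ G.maxDegree := by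
    intro u
    have hsub : Finset.univ.filter (fun t => D.Adj u t) ⊆ G.neighborFinset u := by
      intro t ht
      rw [Finset.mem_filter] at ht
      have h2 := ht.2
      rw [hD, deleteEdges_adj] at h2
      exact (G.mem_neighborFinset u t).mpr h2.1
    calc (Fu u).card ≤ (Finset.univ.filter (fun t => D.Adj u t)).card := Finset.card_image_le
      _ ≤ (G.neighborFinset u).card := Finset.card_le_card hsub
      _ = G.degree u := G.card_neighborFinset_eq_degree u
      _ ≤ G.maxDegree := G.degree_le_maxDegree u
  have hBad : Bad.card ≤ Fx.card + Fy.card + Sf.card * G.maxDegree := by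
    calc Bad.card ≤ (Fx ∪ Fy).card + (Sf.biUnion Fu).card := Finset.card_union_le _ _
      _ ≤ (Fx.card + Fy.card) + (Sf.biUnion Fu).card := by
          exact Nat.add_le_add_right (Finset.card_union_le _ _) _
      _ ≤ (Fx.card + Fy.card) + ∑ u ∈ Sf, (Fu u).card := by
          exact Nat.add_le_add_left (Finset.card_biUnion_le) _
      _ ≤ (Fx.card + Fy.card) + ∑ _u ∈ Sf, G.maxDegree := by
          exact Nat.add_le_add_left (Finset.sum_le_sum fun u _ => hΔu u) _
      _ = Fx.card + Fy.card + Sf.card * G.maxDegree := by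
          rw [Finset.sum_const, smul_eq_mul]
  -- there is a color avoiding all bad colors
  have hΔ0 : (0 : ℚ) ≤ (G.maxDegree : ℚ) := by positivity
  have hq0 : (0 : ℚ) ≤ ((k + 1 : ℚ) / 2) * (G.maxDegree : ℚ) := by positivity
  have hceil : ((k + 1 : ℚ) / 2) * (G.maxDegree : ℚ) ≤
      ((⌈((k + 1 : ℚ) / 2) * (G.maxDegree : ℚ)⌉.toNat : ℕ) : ℚ) := by
    have h1 : ((⌈((k + 1 : ℚ) / 2) * (G.maxDegree : ℚ)⌉.toNat : ℕ) : ℚ) =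
        ((⌈((k + 1 : ℚ) / 2) * (G.maxDegree : ℚ)⌉ : ℤ) : ℚ) := by
      exact_mod_cast congrArg (fun n : ℤ => (n : ℚ))
        (Int.toNat_of_nonneg (Int.ceil_nonneg hq0))
    rw [h1]
    exact Int.le_ceil _
  have hlt : Bad.card < Fintype.card (Fin ((⌈((k + 1 : ℚ) / 2) * (G.maxDegree : ℚ)⌉).toNat + 1)) := by
    rw [Fintype.card_fin]
    have hB : (Bad.card : ℚ) ≤ (Fx.card : ℚ) + (Fy.card : ℚ) + (Sf.card : ℚ) * (G.maxDegree : ℚ) := by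
      exact_mod_cast hBad
    have hfx : (Fx.card : ℚ) + 1 ≤ (G.maxDegree : ℚ) := by exact_mod_cast hΔx
    have hfy : (Fy.card : ℚ) + 1 ≤ (G.maxDegree : ℚ) := by exact_mod_cast hΔy
    have hsd : (Sf.card : ℚ) * (G.maxDegree : ℚ) ≤ ((k : ℚ) - 3) / 2 * (G.maxDegree : ℚ) :=
      mul_le_mul_of_nonneg_right hcon hΔ0
    have hid : ((k : ℚ) - 3) / 2 * (G.maxDegree : ℚ) + 2 * (G.maxDegree : ℚ) =
        ((k + 1 : ℚ) / 2) * (G.maxDegree : ℚ) := by ring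
    have hcast : (Bad.card : ℚ) <
        (((⌈((k + 1 : ℚ) / 2) * (G.maxDegree : ℚ)⌉).toNat + 1 : ℕ) : ℚ) := by
      push_cast
      linarith
    exact_mod_cast hcast
  obtain ⟨γ, hγBad⟩ : ∃ γ, γ ∉ Bad := by
    by_contra hall
    push_neg at hall
    have hsub : (Finset.univ : Finset (Fin ((⌈((k + 1 : ℚ) / 2) * (G.maxDegree : ℚ)⌉).toNat + 1)))
        ⊆ Bad := fun z _ => hall z
    have := Finset.card_le_card hsub
    rw [Finset.card_univ] at this
    omega
  have hγFx : γ ∉ Fx := fun h => hγBad (Finset.mem_union_left _ (Finset.mem_union_left _ h))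
  have hγFy : γ ∉ Fy := fun h => hγBad (Finset.mem_union_left _ (Finset.mem_union_right _ h))
  have hγFu : ∀ u ∈ Sf, γ ∉ Fu u := fun u hu h =>
    hγBad (Finset.mem_union_right _ (Finset.mem_biUnion.mpr ⟨u, hu, h⟩))
  -- the updated coloring
  set c : Sym2 V → Fin ((⌈((k + 1 : ℚ) / 2) * (G.maxDegree : ℚ)⌉).toNat + 1) :=
    Function.update g s(x, y) γ with hc
  have hcxy : c s(x, y) = γ := Function.update_self _ _ _
  have hce : ∀ e, e ≠ s(x, y) → c e = g e := fun e he => Function.update_of_ne he _ _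
  -- membership helpers
  have hmemFx : ∀ {u : V}, G.Adj x u → u ≠ y → g s(x, u) ∈ Fx := by
    intro u h1 h2
    refine Finset.mem_image.mpr ⟨u, Finset.mem_filter.mpr ⟨Finset.mem_univ _, ?_⟩, rfl⟩
    rw [hD, deleteEdges_adj, Set.mem_singleton_iff]
    exact ⟨h1, fun hh => h2 (Sym2.congr_right.mp hh)⟩
  have hmemFy : ∀ {v' : V}, G.Adj y v' → v' ≠ x → g s(y, v') ∈ Fy := by
    intro v' h1 h2
    refine Finset.mem_image.mpr ⟨v', Finset.mem_filter.mpr ⟨Finset.mem_univ _, ?_⟩, rfl⟩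
    rw [hD, deleteEdges_adj, Set.mem_singleton_iff]
    refine ⟨h1, fun hh => ?_⟩
    rcases Sym2.eq_iff.mp hh with ⟨h3, -⟩ | ⟨-, h4⟩
    · exact hxney h3.symm
    · exact h2 h4
  -- the updated coloring is proper
  have hgp := hg.1
  have hcp : IsProperEdgeColoring G c := by
    intro u v w huv huw hvw
    by_cases h1 : s(u, v) = s(x, y) <;> by_cases h2 : s(u, w) = s(x, y)
    · exact absurd (Sym2.congr_right.mp (h1.trans h2.symm)) hvw
    · rw [h1, hcxy, hce _ h2]
      rcases Sym2.eq_iff.mp h1 with ⟨rfl, rfl⟩ | ⟨rfl, rfl⟩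
      · intro hh
        exact hγFx (by rw [hh]; exact hmemFx huw (Ne.symm hvw))
      · intro hh
        exact hγFy (by rw [hh]; exact hmemFy huw (Ne.symm hvw))
    · rw [h2, hcxy, hce _ h1]
      rcases Sym2.eq_iff.mp h2 with ⟨rfl, rfl⟩ | ⟨rfl, rfl⟩
      · intro hh
        exact hγFx (by rw [← hh]; exact hmemFx huv hvw)
      · intro hh
        exact hγFy (by rw [← hh]; exact hmemFy huv hvw)
    · rw [hce _ h1, hce _ h2]
      refine hgp ?_ ?_ hvw
      · rw [hD, deleteEdges_adj, Set.mem_singleton_iff]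
        exact ⟨huv, h1⟩
      · rw [hD, deleteEdges_adj, Set.mem_singleton_iff]
        exact ⟨huw, h2⟩
  -- the updated coloring is acyclic: contradiction with hinvalid
  refine hinvalid γ ⟨hcp, ?_⟩
  intro v w hw hcard2
  by_cases hin : s(x, y) ∈ w.edges
  · -- the cycle goes through the edge xy
    have hxsupp : x ∈ w.support := w.fst_mem_support_of_mem_edges hin
    have hperm : List.Perm (w.rotate x hxsupp).edges w.edges := (w.rotate_edges x hxsupp).perm
    have hc1 : (w.rotate x hxsupp).IsCycle := hw.rotate hxsupp
    have hin1 : s(x, y) ∈ (w.rotate x hxsupp).edges := hperm.mem_iff.mpr hin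
    obtain ⟨P, hPpath, hPlen, hPsub⟩ := exists_path_of_cycle hc1 hin1
    have hT : ((w.rotate x hxsupp).edges.map c).toFinset = (w.edges.map c).toFinset :=
      List.toFinset_eq_of_perm _ _ (hperm.map c)
    have hγT : γ ∈ (w.edges.map c).toFinset := by
      rw [List.mem_toFinset]
      exact List.mem_map.mpr ⟨s(x, y), hin, hcxy⟩
    obtain ⟨z1, z2, hz12, hTz⟩ := Finset.card_eq_two.mp hcard2
    obtain ⟨β, hTβ⟩ : ∃ β, (w.edges.map c).toFinset = {γ, β} := by
      have hγz : γ = z1 ∨ γ = z2 := by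
        rw [hTz] at hγT
        simpa using hγT
      rcases hγz with rfl | rfl
      · exact ⟨z2, hTz⟩
      · exact ⟨z1, by rw [hTz]; exact Finset.pair_comm _ _⟩
    have hcol : ∀ e ∈ P.edges, c e = γ ∨ c e = β := by
      intro e hee
      have hmem : c e ∈ (w.edges.map c).toFinset := by
        rw [← hT, List.mem_toFinset]
        exact List.mem_map.mpr ⟨e, hPsub e hee, rfl⟩
      rw [hTβ] at hmem
      simpa using hmem
    obtain ⟨u, t, v', hxu, huy, hut, htx, hyv, hv'x, hcxu, hcyv, hcut⟩ :=
      extract_bichromatic hcp hxy hcxy hPpath hPlen hcol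
    have hux : u ≠ x := hxu.ne'
    have hsxu : s(x, u) ≠ s(x, y) := fun hh => huy (Sym2.congr_right.mp hh)
    have hsyv : s(y, v') ≠ s(x, y) := by
      intro hh
      rcases Sym2.eq_iff.mp hh with ⟨h3, -⟩ | ⟨-, h4⟩
      · exact hxney h3.symm
      · exact hv'x h4
    have hsut : s(u, t) ≠ s(x, y) := by
      intro hh
      rcases Sym2.eq_iff.mp hh with ⟨h3, -⟩ | ⟨h3, -⟩
      · exact hux h3
      · exact huy h3
    have hgu : g s(x, u) = β := by rw [← hce _ hsxu]; exact hcxu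
    have hgyv : g s(y, v') = β := by rw [← hce _ hsyv]; exact hcyv
    have huSf : u ∈ Sf := by
      rw [hSf, Finset.mem_filter]
      refine ⟨Finset.mem_univ _, ?_, ?_⟩
      · rw [hD, deleteEdges_adj, Set.mem_singleton_iff]
        exact ⟨hxu, hsxu⟩
      · rw [hgu, ← hgyv]
        exact hmemFy hyv hv'x
    refine hγFu u huSf ?_
    refine Finset.mem_image.mpr ⟨t, Finset.mem_filter.mpr ⟨Finset.mem_univ _, ?_⟩, ?_⟩
    · rw [hD, deleteEdges_adj, Set.mem_singleton_iff]
      exact ⟨hut, hsut⟩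
    · rw [← hce _ hsut]
      exact hcut
  · -- the cycle avoids the edge xy: transfer to D and use hg
    have hsub : ∀ e ∈ w.edges, e ∈ D.edgeSet := by
      intro e hee
      rw [hD, edgeSet_deleteEdges]
      refine ⟨w.edges_subset_edgeSet hee, ?_⟩
      intro hh
      rw [Set.mem_singleton_iff] at hh
      exact hin (hh ▸ hee)
    have hw' : (w.transfer D hsub).IsCycle := hw.transfer hsub
    have hne := hg.2 v (w.transfer D hsub) hw'
    rw [Walk.edges_transfer] at hne
    apply hne
    rw [← hcard2]
    congr 1
    congr 1
    apply List.map_congr_left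
    intro e hee
    exact (hce e (fun hh => hin (hh ▸ hee))).symm
end

section
/- Let G be a graph, xy an edge with deg_G(x) = 2, and let x' be the other neighbor of x. Suppose g is an acyclic edge coloring of G \ xy such that the color α = g(xx') appears on an edge yy' incident to y with deg(y') ≤ 3. Then there are at most Δ + 1 colors that are either incident to the edge xy or appear on edges incident to y' other than yy'; in particular, if at least Δ + 2 colors are available in total, some color can be assigned to xy extending g to an acyclic edge coloring of G. -/
open SimpleGraph

section Aux

variable {V : Type*}

private lemma list_head_ne_getLast {α : Type*} {l : List α} (hnd : l.Nodup)
    (h2 : 2 ≤ l.length) (hne : l ≠ []) : l.head hne ≠ l.getLast hne := by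
  match l with
  | [] => simp at hne
  | [a] => simp at h2
  | a :: b :: l' =>
    have h1 : (b :: l') ≠ [] := by simp
    rw [List.head_cons, List.getLast_cons h1]
    have := List.getLast_mem h1
    intro h
    rw [← h] at this
    exact (List.nodup_cons.mp hnd).1 this

/-- In a cycle, any vertex on the cycle has two distinct neighbors along cycle edges. -/
private lemma cycle_two_edges [DecidableEq V] {G : SimpleGraph V} {u v : V} (w : G.Walk u u)
    (hc : w.IsCycle) (hv : v ∈ w.support) :
    ∃ b d : V, b ≠ d ∧ G.Adj v b ∧ G.Adj v d ∧ s(v, b) ∈ w.edges ∧ s(v, d) ∈ w.edges := by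
  have hc' := hc.rotate hv
  have hrot := (w.rotate_edges v hv).perm
  have hmem : ∀ e, e ∈ (w.rotate v hv).edges → e ∈ w.edges := fun e he => hrot.mem_iff.mp he
  obtain ⟨b, hb, q, hq⟩ := SimpleGraph.Walk.not_nil_iff.mp hc'.not_nil
  have hlen : 3 ≤ (w.rotate v hv).length := hc'.three_le_length
  have hdarts : (w.rotate v hv).darts ≠ [] := by
    have : 0 < (w.rotate v hv).darts.length := by
      rw [SimpleGraph.Walk.length_darts]; omega
    exact List.ne_nil_of_length_pos this
  set D := (w.rotate v hv).darts.getLast hdarts with hD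
  have hDsnd : D.snd = v := congrArg (fun d : G.Dart => d.snd) (SimpleGraph.Walk.getLast_darts_eq_lastDart hdarts)
  have hedges_ne : (w.rotate v hv).edges ≠ [] := by
    have : 0 < (w.rotate v hv).edges.length := by
      rw [SimpleGraph.Walk.length_edges]; omega
    exact List.ne_nil_of_length_pos this
  have hDe : D.edge = s(D.fst, D.snd) := rfl
  have hlast? : (w.rotate v hv).edges.getLast? = some s(D.fst, v) := by
    have h1 : (w.rotate v hv).edges.getLast? = some D.edge := by
      simp only [SimpleGraph.Walk.edges, List.getLast?_map]
      rw [List.getLast?_eq_getLast hdarts, Option.map_some]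
    rw [h1, hDe, hDsnd]
  have hhead? : (w.rotate v hv).edges.head? = some s(v, b) := by
    rw [hq]; rfl
  have hlast : (w.rotate v hv).edges.getLast hedges_ne = s(D.fst, v) := by
    have := List.getLast?_eq_getLast hedges_ne
    rw [this] at hlast?
    exact Option.some.inj hlast?
  have hhead : (w.rotate v hv).edges.head hedges_ne = s(v, b) := by
    have := List.head?_eq_head hedges_ne
    rw [this] at hhead?
    exact Option.some.inj hhead?
  have hDadj : G.Adj v D.fst := by
    have := D.adj
    rw [hDsnd] at this
    exact this.symm
  refine ⟨b, D.fst, ?_, hb, hDadj, hmem _ ?_, hmem _ ?_⟩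
  · intro hbd
    have hnd : (w.rotate v hv).edges.Nodup := hc'.edges_nodup
    have h2 : 2 ≤ (w.rotate v hv).edges.length := by
      rw [SimpleGraph.Walk.length_edges]; omega
    apply list_head_ne_getLast hnd h2 hedges_ne
    rw [hhead, hlast, hbd, Sym2.eq_swap]
  · rw [← hhead]; exact List.head_mem hedges_ne
  · rw [Sym2.eq_swap, ← hlast]; exact List.getLast_mem hedges_ne

end Aux

theorem degree_two_low_degree_case {V : Type*} [Fintype V] [DecidableEq V]
    (G : SimpleGraph V) [DecidableRel G.Adj] {x y x' y' : V} (hxy : G.Adj x y)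
    (hdx : G.degree x = 2) (hxx' : G.Adj x x') (hx'y : x' ≠ y)
    (g : Sym2 V → ℕ) (hg : IsAcyclicEdgeColoring (G.deleteEdges {s(x, y)}) g)
    (hyy' : (G.deleteEdges {s(x, y)}).Adj y y') (hcol : g s(y, y') = g s(x, x'))
    (hdy' : G.degree y' ≤ 3) :
    ({c : ℕ | (∃ w, (G.deleteEdges {s(x, y)}).Adj x w ∧ g s(x, w) = c) ∨
        (∃ w, (G.deleteEdges {s(x, y)}).Adj y w ∧ g s(y, w) = c) ∨
        (∃ w, (G.deleteEdges {s(x, y)}).Adj y' w ∧ w ≠ y ∧ g s(y', w) = c)}).ncard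
      ≤ G.maxDegree + 1 ∧
    ∀ N : ℕ, G.maxDegree + 2 ≤ N →
      (∀ e ∈ (G.deleteEdges {s(x, y)}).edgeSet, g e < N) →
      ∃ γ < N, IsAcyclicEdgeColoring G (Function.update g s(x, y) γ) := by
  classical
  set G' := G.deleteEdges {s(x, y)} with hG'
  have hyx : y ≠ x := hxy.ne'
  have hxyne : x ≠ y := hxy.ne
  have hG'adj : ∀ a b : V, G'.Adj a b ↔ G.Adj a b ∧ s(a, b) ≠ s(x, y) := by
    intro a b
    rw [hG', SimpleGraph.deleteEdges_adj]
    simp [Set.mem_singleton_iff]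
  have hy'y : y' ≠ y := hyy'.ne'
  have hy'x : y' ≠ x := by
    intro h
    subst h
    exact ((hG'adj y y').mp hyy').2 (Sym2.eq_swap)
  have hNx : G.neighborFinset x = {y, x'} := by
    symm
    apply Finset.eq_of_subset_of_card_le
    · intro a ha
      simp only [Finset.mem_insert, Finset.mem_singleton] at ha
      rcases ha with rfl | rfl
      · exact (SimpleGraph.mem_neighborFinset G x a).mpr hxy
      · exact (SimpleGraph.mem_neighborFinset G x a).mpr hxx'
    · rw [SimpleGraph.card_neighborFinset_eq_degree, hdx]
      rw [Finset.card_insert_of_notMem (by simp [hx'y.symm]), Finset.card_singleton]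
  have hxadj : ∀ w, G'.Adj x w → w = x' := by
    intro w hw
    rw [hG'adj] at hw
    have hwmem : w ∈ G.neighborFinset x := (SimpleGraph.mem_neighborFinset G x w).mpr hw.1
    rw [hNx] at hwmem
    simp only [Finset.mem_insert, Finset.mem_singleton] at hwmem
    rcases hwmem with rfl | rfl
    · exact absurd rfl hw.2
    · rfl
  have hG'yadj : ∀ w, G'.Adj y w ↔ G.Adj y w ∧ w ≠ x := by
    intro w
    rw [hG'adj]
    constructor
    · rintro ⟨h1, h2⟩
      refine ⟨h1, fun hwx => h2 ?_⟩
      subst hwx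
      rw [Sym2.eq_swap]
    · rintro ⟨h1, h2⟩
      refine ⟨h1, fun he => ?_⟩
      rw [Sym2.eq_iff] at he
      rcases he with ⟨h3, _⟩ | ⟨_, h4⟩
      · exact hyx h3
      · exact h2 h4
  have hG'y'adj : ∀ w, G'.Adj y' w ↔ G.Adj y' w := by
    intro w
    rw [hG'adj]
    constructor
    · exact fun h => h.1
    · refine fun h => ⟨h, fun he => ?_⟩
      rw [Sym2.eq_iff] at he
      rcases he with ⟨h3, _⟩ | ⟨h3, _⟩
      · exact hy'x h3
      · exact hy'y h3
  set B : Finset ℕ := ((G.neighborFinset y).erase x).image (fun w => g s(y, w)) with hB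
  set C : Finset ℕ := ((G.neighborFinset y').erase y).image (fun w => g s(y', w)) with hC
  have hSeq : {c : ℕ | (∃ w, G'.Adj x w ∧ g s(x, w) = c) ∨
      (∃ w, G'.Adj y w ∧ g s(y, w) = c) ∨
      (∃ w, G'.Adj y' w ∧ w ≠ y ∧ g s(y', w) = c)} = ↑(B ∪ C) := by
    ext c
    simp only [Set.mem_setOf_eq, Finset.coe_union, Set.mem_union, Finset.mem_coe, hB, hC,
      Finset.mem_image, Finset.mem_erase, SimpleGraph.mem_neighborFinset]
    constructor
    · rintro (⟨w, hw, hc⟩ | ⟨w, hw, hc⟩ | ⟨w, hw, hwy, hc⟩)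
      · left
        refine ⟨y', ⟨hy'x, ((hG'yadj y').mp hyy').1⟩, ?_⟩
        rw [hxadj w hw] at hc
        exact hcol.trans hc
      · rw [hG'yadj] at hw
        exact Or.inl ⟨w, ⟨hw.2, hw.1⟩, hc⟩
      · rw [hG'y'adj] at hw
        exact Or.inr ⟨w, ⟨hwy, hw⟩, hc⟩
    · rintro (⟨w, ⟨hwx, hadj⟩, hc⟩ | ⟨w, ⟨hwy, hadj⟩, hc⟩)
      · exact Or.inr (Or.inl ⟨w, (hG'yadj w).mpr ⟨hadj, hwx⟩, hc⟩)
      · exact Or.inr (Or.inr ⟨w, (hG'y'adj w).mpr hadj, hwy, hc⟩)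
  have hdegy : G.degree y ≤ G.maxDegree := G.degree_le_maxDegree y
  have hdegy1 : 1 ≤ G.degree y := by
    rw [← SimpleGraph.card_neighborFinset_eq_degree]
    exact Finset.card_pos.mpr ⟨x, (SimpleGraph.mem_neighborFinset G y x).mpr hxy.symm⟩
  have hcardB : B.card ≤ G.degree y - 1 := by
    calc B.card ≤ ((G.neighborFinset y).erase x).card := Finset.card_image_le
    _ = G.degree y - 1 := by
        rw [Finset.card_erase_of_mem ((SimpleGraph.mem_neighborFinset G y x).mpr hxy.symm),
          SimpleGraph.card_neighborFinset_eq_degree]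
  have hcardC : C.card ≤ 2 := by
    calc C.card ≤ ((G.neighborFinset y').erase y).card := Finset.card_image_le
    _ = G.degree y' - 1 := by
        rw [Finset.card_erase_of_mem
          ((SimpleGraph.mem_neighborFinset G y' y).mpr (((hG'y'adj y).mp hyy'.symm))),
          SimpleGraph.card_neighborFinset_eq_degree]
    _ ≤ 2 := by omega
  have hcard : (B ∪ C).card ≤ G.maxDegree + 1 := by
    have := Finset.card_union_le B C
    omega
  refine ⟨?_, ?_⟩
  · rw [hSeq, Set.ncard_coe_finset]
    exact hcard
  · intro N hN hltN
    have hsubR : B ∪ C ⊆ Finset.range N := by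
      intro c hc
      rw [Finset.mem_range]
      rw [Finset.mem_union] at hc
      rcases hc with hc | hc
      · rw [hB] at hc
        simp only [Finset.mem_image, Finset.mem_erase, SimpleGraph.mem_neighborFinset] at hc
        obtain ⟨w, ⟨hwx, hadj⟩, hc⟩ := hc
        rw [← hc]
        exact hltN _ ((SimpleGraph.mem_edgeSet G').mpr ((hG'yadj w).mpr ⟨hadj, hwx⟩))
      · rw [hC] at hc
        simp only [Finset.mem_image, Finset.mem_erase, SimpleGraph.mem_neighborFinset] at hc
        obtain ⟨w, ⟨hwy, hadj⟩, hc⟩ := hc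
        rw [← hc]
        exact hltN _ ((SimpleGraph.mem_edgeSet G').mpr ((hG'y'adj w).mpr hadj))
    have hexg : ∃ γ ∈ Finset.range N, γ ∉ B ∪ C := by
      by_contra h
      push_neg at h
      have hsub2 : Finset.range N ⊆ B ∪ C := fun a ha => h a ha
      have := Finset.card_le_card hsub2
      rw [Finset.card_range] at this
      omega
    obtain ⟨γ, hγR, hγ⟩ := hexg
    rw [Finset.mem_range] at hγR
    have hγB : ∀ w, G'.Adj y w → g s(y, w) ≠ γ := by
      intro w hw hEq
      apply hγ
      rw [Finset.mem_union]
      left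
      rw [hB]
      simp only [Finset.mem_image, Finset.mem_erase, SimpleGraph.mem_neighborFinset]
      rw [hG'yadj] at hw
      exact ⟨w, ⟨hw.2, hw.1⟩, hEq⟩
    have hγC : ∀ w, G'.Adj y' w → w ≠ y → g s(y', w) ≠ γ := by
      intro w hw hwy hEq
      apply hγ
      rw [Finset.mem_union]
      right
      rw [hC]
      simp only [Finset.mem_image, Finset.mem_erase, SimpleGraph.mem_neighborFinset]
      rw [hG'y'adj] at hw
      exact ⟨w, ⟨hwy, hw⟩, hEq⟩
    have hγα : g s(x, x') ≠ γ := by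
      rw [← hcol]
      exact hγB y' hyy'
    have hγx : ∀ w, G'.Adj x w → g s(x, w) ≠ γ := by
      intro w hw
      rw [hxadj w hw]
      exact hγα
    set c' := Function.update g s(x, y) γ with hc'def
    have hupd : ∀ e, e ≠ s(x, y) → c' e = g e := fun e he => Function.update_of_ne he _ _
    have hupdxy : c' s(x, y) = γ := Function.update_self _ _ _
    have key : ∀ ⦃u v w : V⦄, G.Adj u v → G.Adj u w → v ≠ w → s(u, v) = s(x, y) →
        c' s(u, v) ≠ c' s(u, w) := by
      intro u v w huv huw hvw he
      have hne2 : s(u, w) ≠ s(x, y) := by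
        intro h2
        exact hvw (Sym2.congr_right.mp (he.trans h2.symm))
      rw [he, hupdxy, hupd _ hne2]
      rw [Sym2.eq_iff] at he
      rcases he with ⟨rfl, rfl⟩ | ⟨rfl, rfl⟩
      · exact (hγx w ((hG'adj u w).mpr ⟨huw, hne2⟩)).symm
      · exact (hγB w ((hG'adj u w).mpr ⟨huw, hne2⟩)).symm
    refine ⟨γ, hγR, ?_⟩
    rw [← hc'def]
    refine ⟨?_, ?_⟩
    · intro u v w huv huw hvw
      by_cases h1 : s(u, v) = s(x, y)
      · exact key huv huw hvw h1
      · by_cases h2 : s(u, w) = s(x, y)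
        · exact (key huw huv hvw.symm h2).symm
        · rw [hupd _ h1, hupd _ h2]
          exact hg.1 ((hG'adj u v).mpr ⟨huv, h1⟩) ((hG'adj u w).mpr ⟨huw, h2⟩) hvw
    · intro v w hw hcard2
      by_cases hin : s(x, y) ∈ w.edges
      · -- the cycle uses the edge xy
        have hxs : x ∈ w.support := w.fst_mem_support_of_mem_edges hin
        have hys : y ∈ w.support := w.snd_mem_support_of_mem_edges hin
        obtain ⟨b, d, hbd, hb, hd, hbe, hde⟩ := cycle_two_edges w hw hxs
        have hx'in : s(x, x') ∈ w.edges := by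
          have hbm : b = y ∨ b = x' := by
            have := (SimpleGraph.mem_neighborFinset G x b).mpr hb
            rw [hNx] at this
            simpa using this
          have hdm : d = y ∨ d = x' := by
            have := (SimpleGraph.mem_neighborFinset G x d).mpr hd
            rw [hNx] at this
            simpa using this
          rcases hbm with rfl | rfl
          · rcases hdm with rfl | rfl
            · exact absurd rfl hbd
            · exact hde
          · exact hbe
        have hsxx' : s(x, x') ≠ s(x, y) := fun h => hx'y (Sym2.congr_right.mp h)
        have hα : c' s(x, x') = g s(x, x') := hupd _ hsxx'
        have hset : (w.edges.map c').toFinset = {γ, g s(x, x')} := by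
          symm
          apply Finset.eq_of_subset_of_card_le
          · intro a ha
            simp only [Finset.mem_insert, Finset.mem_singleton] at ha
            rw [List.mem_toFinset, List.mem_map]
            rcases ha with rfl | rfl
            · exact ⟨s(x, y), hin, hupdxy⟩
            · exact ⟨s(x, x'), hx'in, hα⟩
          · rw [hcard2]
            rw [Finset.card_insert_of_notMem (by simp only [Finset.mem_singleton]; exact fun h => hγα h.symm),
              Finset.card_singleton]
        have hall : ∀ e ∈ w.edges, c' e = γ ∨ c' e = g s(x, x') := by
          intro e he
          have hmem : c' e ∈ (w.edges.map c').toFinset := by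
            rw [List.mem_toFinset, List.mem_map]
            exact ⟨e, he, rfl⟩
          rw [hset] at hmem
          simpa using hmem
        have hyz : ∀ z, s(y, z) ∈ w.edges → z ≠ x → z = y' := by
          intro z hz hzx
          have hadjz : G.Adj y z := by
            have := w.edges_subset_edgeSet hz
            rwa [SimpleGraph.mem_edgeSet] at this
          have hnz : s(y, z) ≠ s(x, y) := by
            intro hEqq
            rw [Sym2.eq_iff] at hEqq
            rcases hEqq with ⟨h1, _⟩ | ⟨_, h2⟩
            · exact hyx h1
            · exact hzx h2
          have hG'z : G'.Adj y z := (hG'adj y z).mpr ⟨hadjz, hnz⟩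
          have hcz := hall _ hz
          rw [hupd _ hnz] at hcz
          rcases hcz with h | h
          · exact absurd h (hγB z hG'z)
          · by_contra hne
            exact hg.1 hG'z hyy' hne (h.trans hcol.symm)
        obtain ⟨b2, d2, hbd2, hb2, hd2, hbe2, hde2⟩ := cycle_two_edges w hw hys
        have hyy'in : s(y, y') ∈ w.edges := by
          by_cases hb2x : b2 = x
          · have hd2x : d2 ≠ x := by
              rintro rfl
              exact hbd2 hb2x
            have h2 := hyz d2 hde2 hd2x
            rwa [h2] at hde2
          · have h2 := hyz b2 hbe2 hb2x
            rwa [h2] at hbe2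
        have hy's : y' ∈ w.support := w.snd_mem_support_of_mem_edges hyy'in
        obtain ⟨b3, d3, hbd3, hb3, hd3, hbe3, hde3⟩ := cycle_two_edges w hw hy's
        have hy'z : ∀ z, G.Adj y' z → s(y', z) ∈ w.edges → z = y := by
          intro z hadjz hz
          have hnz : s(y', z) ≠ s(x, y) := by
            intro hEqq
            rw [Sym2.eq_iff] at hEqq
            rcases hEqq with ⟨h1, _⟩ | ⟨h1, _⟩
            · exact hy'x h1
            · exact hy'y h1
          have hG'z : G'.Adj y' z := (hG'adj y' z).mpr ⟨hadjz, hnz⟩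
          by_contra hne
          have hcz := hall _ hz
          rw [hupd _ hnz] at hcz
          rcases hcz with h | h
          · exact hγC z hG'z hne h
          · apply hg.1 hG'z hyy'.symm hne
            rw [h, ← hcol]
            exact (congrArg g Sym2.eq_swap).symm
        exact hbd3 ((hy'z b3 hb3 hbe3).trans (hy'z d3 hd3 hde3).symm)
      · -- the cycle avoids the edge xy : transfer to G'
        have hsub : ∀ e ∈ w.edges, e ∈ G'.edgeSet := by
          intro e he
          rw [hG', SimpleGraph.edgeSet_deleteEdges]
          refine ⟨w.edges_subset_edgeSet he, ?_⟩
          intro h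
          rw [Set.mem_singleton_iff] at h
          exact hin (h ▸ he)
        have hmapeq : w.edges.map c' = w.edges.map g := by
          apply List.map_congr_left
          intro e he
          exact hupd e (fun h => hin (h ▸ he))
        have := hg.2 v (w.transfer G' hsub) (hw.transfer hsub)
        rw [SimpleGraph.Walk.edges_transfer] at this
        rw [hmapeq] at hcard2
        exact this hcard2
end

section
/- Let G be a graph with an edge xy where deg(x) ≤ k, and let g be an acyclic edge coloring of G \ xy with a set C of colors. Define S = {u ∈ N(x)\{y} : ∃ v ∈ N(y) with g(xu) = g(yv)}, and suppose |S| = q. Then the number of colors that are candidates for xy but not valid for xy is at most q(Δ−1), where Δ is the maximum degree of G. -/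
open SimpleGraph

section MyAux

variable {V : Type*} {G : SimpleGraph V}

/-- In a walk with nodup support, no dart starts at the final vertex. -/
lemma aux_no_dart_from_end {b v : V} {p : G.Walk b v} (hp : p.support.Nodup)
    {d : G.Dart} (hd : d ∈ p.darts) : d.toProd.1 ≠ v := by
  have h1 : d.toProd.1 ∈ p.support.dropLast := by
    rw [← p.map_fst_darts]; exact List.mem_map_of_mem hd
  have h2 : p.support.dropLast ++ [v] = p.support := by
    have h3 := List.dropLast_append_getLast (l := p.support) (by simp)
    rwa [p.getLast_support] at h3
  rw [← h2] at hp
  have := List.disjoint_of_nodup_append hp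
  intro h; subst h
  exact this h1 (by simp)

lemma aux_isCycle_reverse {v : V} {p : G.Walk v v} (h : p.IsCycle) : p.reverse.IsCycle := by
  constructor
  · constructor
    · exact h.isCircuit.isTrail.reverse p
    · intro hn
      apply h.isCircuit.ne_nil
      rw [← Walk.reverse_reverse p, hn, Walk.reverse_nil]
  · rw [Walk.support_reverse, List.tail_reverse]
    have hnd := h.support_nodup
    have hne : p.support ≠ [] := by simp
    rw [List.nodup_reverse]
    -- p.support = v :: tail, dropLast = v :: tail.dropLast (if tail ≠ [])
    have h3 : 3 ≤ p.length := h.three_le_length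
    have htne : p.support.tail ≠ [] := by
      have := p.length_support
      intro hcon
      have : p.support.length = 1 := by
        rw [p.support_eq_cons, hcon]; rfl
      omega
    have h2 : p.support.dropLast ++ [v] = p.support := by
      have h3' := List.dropLast_append_getLast (l := p.support) (by simp)
      rwa [p.getLast_support] at h3'
    have hdL : p.support.dropLast = v :: p.support.tail.dropLast := by
      conv_lhs => rw [p.support_eq_cons]
      rw [List.dropLast_cons_of_ne_nil htne]
    have hsplit : p.support.tail.dropLast ++ [v] = p.support.tail := by
      rw [hdL] at h2
      conv_rhs at h2 => rw [p.support_eq_cons]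
      simpa only [List.cons_append, List.cons.injEq, true_and] using h2
    rw [hdL]
    rw [← hsplit] at hnd
    have hdisj := List.disjoint_of_nodup_append hnd
    refine List.nodup_cons.mpr ⟨?_, (List.Nodup.of_append_left hnd)⟩
    intro hv
    exact hdisj hv (by simp)

/-- Decompose a cycle at `x` whose dart list contains the dart `(x, y)`. -/
lemma aux_decomp {x y : V} (W : G.Walk x x) (hW : W.IsCycle)
    (hd : ∃ d ∈ W.darts, d.toProd = (x, y)) :
    ∃ (h : G.Adj x y) (p : G.Walk y x), W = Walk.cons h p := by
  cases W with
  | nil => exact absurd rfl hW.ne_nil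
  | cons h' p =>
    obtain ⟨d, hd, hprod⟩ := hd
    rw [Walk.darts_cons] at hd
    rcases List.mem_cons.mp hd with rfl | hd
    · simp only [Walk.firstDart_toProd] at hprod
      have hy : _ = y := congrArg Prod.snd hprod
      simp only at hy
      subst hy
      exact ⟨h', p, rfl⟩
    · have hnd : p.support.Nodup := by
        have := hW.support_nodup
        simpa using this
      exact absurd (by rw [hprod]) (aux_no_dart_from_end hnd hd)

end MyAux

section MyExt
variable {V : Type*} {G : SimpleGraph V}

/-- Extraction from a bichromatic cycle starting with the edge `xy`. -/
lemma aux_extract {x y : V} (hxy : G.Adj x y) (p : G.Walk y x)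
    (hW : (Walk.cons hxy p).IsCycle) (c : Sym2 V → ℕ)
    (hc : IsProperEdgeColoring G c) {η : ℕ}
    (hcolor : ∀ e ∈ (Walk.cons hxy p).edges, c e = c s(x, y) ∨ c e = η) :
    ∃ a w' v', G.Adj x a ∧ G.Adj y v' ∧ a ≠ x ∧ a ≠ y ∧ v' ≠ x ∧ w' ≠ x ∧
      c s(x, a) = η ∧ c s(y, v') = η ∧ G.Adj a w' ∧ c s(a, w') = c s(x, y) := by
  have hlen : 3 ≤ (Walk.cons hxy p).length := hW.three_le_length
  have hplen : 2 ≤ p.length := by simpa using hlen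
  have hpnd : p.support.Nodup := by simpa using hW.support_nodup
  -- destructure p to get v'
  cases p with
  | nil => exact absurd rfl hxy.ne'
  | cons hv p2 =>
  rename_i v'
  -- v' ≠ x
  have hv'x : v' ≠ x := by
    rintro rfl
    have : p2.support.Nodup := by
      simpa using hpnd.of_cons
    have : p2 = Walk.nil := Walk.isPath_iff_eq_nil.mp ((Walk.isPath_def p2).mpr this)
    subst this
    simp at hplen
  -- facts about the reverse of p
  have h1 : (Walk.cons hv p2).reverse.support.Nodup := by
    rw [Walk.support_reverse, List.nodup_reverse]; exact hpnd
  have h2 : 2 ≤ (Walk.cons hv p2).reverse.length := by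
    rwa [Walk.length_reverse]
  have h3 : ∀ e ∈ (Walk.cons hv p2).reverse.edges, e ∈ (Walk.cons hxy (Walk.cons hv p2)).edges := by
    intro e he
    rw [Walk.edges_reverse, List.mem_reverse] at he
    rw [Walk.edges_cons, List.mem_cons]
    right; exact he
  rcases hpr : (Walk.cons hv p2).reverse with _ | ⟨hxa, pr2⟩
  · rw [hpr] at h2; simp at h2
  · rw [hpr] at h1 h2 h3
    rename_i a
    cases pr2 with
    | nil => rw [Walk.length_cons] at h2; simp at h2
    | cons haw pr3 =>
    rename_i w'
    -- support facts
    simp only [Walk.support_cons, List.nodup_cons, List.mem_cons, not_or] at h1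
    obtain ⟨⟨hxa', hxp⟩, hap, hnd3⟩ := h1
    have hax : a ≠ x := fun h => hxa' h.symm
    have hwx : w' ≠ x := fun h => hxp (by rw [← h]; exact pr3.start_mem_support)
    have hay : a ≠ y := fun h => hap (by rw [h]; exact pr3.end_mem_support)
    -- edges membership
    have hmem_xa : s(x, a) ∈ (Walk.cons hxy (Walk.cons hv p2)).edges := h3 _ (by simp)
    have hmem_aw : s(a, w') ∈ (Walk.cons hxy (Walk.cons hv p2)).edges := h3 _ (by simp)
    have hmem_yv : s(y, v') ∈ (Walk.cons hxy (Walk.cons hv p2)).edges := by simp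
    -- colors
    have hcxa : c s(x, a) = η := by
      rcases hcolor _ hmem_xa with h | h
      · exact absurd h (hc hxa hxy hay)
      · exact h
    have hcyv : c s(y, v') = η := by
      rcases hcolor _ hmem_yv with h | h
      · rw [Sym2.eq_swap (a := x) (b := y)] at h
        exact absurd h (hc hv hxy.symm hv'x)
      · exact h
    have hcaw : c s(a, w') = c s(x, y) := by
      rcases hcolor _ hmem_aw with h | h
      · exact h
      · exfalso
        apply hc haw hxa.symm hwx
        rw [h, Sym2.eq_swap (a := a) (b := x), hcxa]
    exact ⟨a, w', v', hxa, hv, hax, hay, hv'x, hwx, hcxa, hcyv, haw, hcaw⟩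

end MyExt

section MyKey

variable {V : Type*} [DecidableEq V] {G : SimpleGraph V}

/-- Properness of the updated coloring for a candidate color. -/
lemma aux_proper {x y : V} (hxy : G.Adj x y) (g : Sym2 V → ℕ)
    (hg : IsProperEdgeColoring (G.deleteEdges {s(x, y)}) g) {γ : ℕ}
    (hcx : ∀ w, (G.deleteEdges {s(x, y)}).Adj x w → g s(x, w) ≠ γ)
    (hcy : ∀ w, (G.deleteEdges {s(x, y)}).Adj y w → g s(y, w) ≠ γ) :
    IsProperEdgeColoring G (Function.update g s(x, y) γ) := by
  intro u v w huv huw hvw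
  set c := Function.update g s(x, y) γ with hc
  by_cases h1 : s(u, v) = s(x, y) <;> by_cases h2 : s(u, w) = s(x, y)
  · exact absurd (Sym2.congr_right.mp (h1.trans h2.symm)) hvw
  · have hcv : c s(u, v) = γ := by rw [hc, h1, Function.update_self]
    have hcw : c s(u, w) = g s(u, w) := by rw [hc, Function.update_of_ne h2]
    rw [hcv, hcw]
    rcases Sym2.eq_iff.mp h1 with ⟨h3, h4⟩ | ⟨h3, h4⟩
    · rw [h3] at huw h2 ⊢
      exact fun h => hcx w (by rw [deleteEdges_adj]; exact ⟨huw, by simpa using h2⟩) h.symm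
    · rw [h3] at huw h2 ⊢
      exact fun h => hcy w (by rw [deleteEdges_adj]; exact ⟨huw, by simpa using h2⟩) h.symm
  · have hcv : c s(u, v) = g s(u, v) := by rw [hc, Function.update_of_ne h1]
    have hcw : c s(u, w) = γ := by rw [hc, h2, Function.update_self]
    rw [hcv, hcw]
    rcases Sym2.eq_iff.mp h2 with ⟨h3, h4⟩ | ⟨h3, h4⟩
    · rw [h3] at huv h1 ⊢
      exact hcx v (by rw [deleteEdges_adj]; exact ⟨huv, by simpa using h1⟩)
    · rw [h3] at huv h1 ⊢
      exact hcy v (by rw [deleteEdges_adj]; exact ⟨huv, by simpa using h1⟩)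
  · have hcv : c s(u, v) = g s(u, v) := by rw [hc, Function.update_of_ne h1]
    have hcw : c s(u, w) = g s(u, w) := by rw [hc, Function.update_of_ne h2]
    rw [hcv, hcw]
    exact hg (by rw [deleteEdges_adj]; exact ⟨huv, by simpa using h1⟩)
      (by rw [deleteEdges_adj]; exact ⟨huw, by simpa using h2⟩) hvw

/-- Key lemma: each invalid candidate color appears at a vertex of S, away from x. -/
lemma aux_key {x y : V} (hxy : G.Adj x y) (g : Sym2 V → ℕ)
    (hg : IsAcyclicEdgeColoring (G.deleteEdges {s(x, y)}) g) {γ : ℕ}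
    (hcx : ∀ w, (G.deleteEdges {s(x, y)}).Adj x w → g s(x, w) ≠ γ)
    (hcy : ∀ w, (G.deleteEdges {s(x, y)}).Adj y w → g s(y, w) ≠ γ)
    (hnot : ¬ IsAcyclicEdgeColoring G (Function.update g s(x, y) γ)) :
    ∃ u w, ((G.deleteEdges {s(x, y)}).Adj x u ∧
      ∃ v', (G.deleteEdges {s(x, y)}).Adj y v' ∧ g s(x, u) = g s(y, v')) ∧
      G.Adj u w ∧ w ≠ x ∧ g s(u, w) = γ := by
  set c := Function.update g s(x, y) γ with hcdef
  have hcprop : IsProperEdgeColoring G c := aux_proper hxy g hg.1 hcx hcy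
  -- get a bichromatic cycle
  rw [IsAcyclicEdgeColoring, not_and_or] at hnot
  rcases hnot with h | h
  · exact absurd hcprop h
  push_neg at h
  obtain ⟨v0, W0, hW0, hcard⟩ := h
  -- the cycle must use the edge s(x,y)
  by_cases hmem : s(x, y) ∈ W0.edges
  case neg =>
    exfalso
    have hsub : ∀ e ∈ W0.edges, e ∈ (G.deleteEdges {s(x, y)}).edgeSet := by
      intro e he
      rw [edgeSet_deleteEdges]
      refine ⟨W0.edges_subset_edgeSet he, ?_⟩
      simp only [Set.mem_singleton_iff]
      rintro rfl; exact hmem he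
    have hW0' := hW0.transfer hsub
    apply hg.2 v0 (W0.transfer _ hsub) hW0'
    rw [Walk.edges_transfer]
    rw [show W0.edges.map g = W0.edges.map c from List.map_congr_left fun e he => by
      rw [hcdef, Function.update_of_ne (fun hh => hmem (by rw [← hh]; exact he))]]
    exact hcard
  case pos =>
  -- find a dart for s(x,y); WLOG it is (x, y), by reversing
  obtain ⟨d, hdmem, hdedge⟩ := by
    rw [Walk.edges, List.mem_map] at hmem; exact hmem
  have hdcases : d.toProd = (x, y) ∨ d.toProd = (y, x) := by
    have h' : s(d.toProd.1, d.toProd.2) = s(x, y) := hdedge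
    rw [Sym2.eq_iff] at h'
    rcases h' with ⟨h1, h2⟩ | ⟨h1, h2⟩
    · left; rw [← h1, ← h2]
    · right; rw [← h1, ← h2]
  obtain ⟨W1, hW1, hd1⟩ : ∃ W1 : G.Walk v0 v0, W1.IsCycle ∧
      (∃ d' ∈ W1.darts, d'.toProd = (x, y)) ∧
      (W1.edges.map c).toFinset = (W0.edges.map c).toFinset := by
    rcases hdcases with hd | hd
    · exact ⟨W0, hW0, ⟨d, hdmem, hd⟩, rfl⟩
    · refine ⟨W0.reverse, aux_isCycle_reverse hW0, ⟨d.symm, ?_, ?_⟩, ?_⟩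
      · rw [Walk.darts_reverse, List.mem_reverse, List.mem_map]
        exact ⟨d, hdmem, by simp⟩
      · simp [Dart.symm, hd]
      · rw [Walk.edges_reverse, List.map_reverse, List.toFinset_reverse]
  obtain ⟨hd1, hT1⟩ := hd1
  -- rotate to x
  have hxsup : x ∈ W1.support := by
    obtain ⟨d', hd', hp⟩ := hd1
    have := W1.dart_fst_mem_support_of_mem_darts hd'
    rwa [hp] at this
  obtain ⟨W2, hW2, hd2, hT2⟩ : ∃ W2 : G.Walk x x, W2.IsCycle ∧
      (∃ d' ∈ W2.darts, d'.toProd = (x, y)) ∧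
      (W2.edges.map c).toFinset = (W0.edges.map c).toFinset := by
    refine ⟨W1.rotate x hxsup, hW1.rotate hxsup, ?_, ?_⟩
    · obtain ⟨d', hd', hp⟩ := hd1
      exact ⟨d', (W1.rotate_darts x hxsup).mem_iff.mpr hd', hp⟩
    · rw [← hT1]
      exact List.toFinset_eq_of_perm _ _ ((W1.rotate_edges x hxsup).map c).perm
  -- decompose
  obtain ⟨hxy', p, rfl⟩ := aux_decomp W2 hW2 hd2
  -- color set is {γ, η}
  have hγT : γ ∈ (W0.edges.map c).toFinset := by
    rw [← hT2]
    rw [List.mem_toFinset, List.mem_map]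
    exact ⟨s(x, y), by simp, by rw [hcdef, Function.update_self]⟩
  obtain ⟨α, β, hαβ, hTeq⟩ := Finset.card_eq_two.mp hcard
  have hγc : c s(x, y) = γ := by rw [hcdef, Function.update_self]
  obtain ⟨η, hTeq'⟩ : ∃ η, (W0.edges.map c).toFinset = {γ, η} := by
    rw [hTeq] at hγT ⊢
    rcases Finset.mem_insert.mp hγT with rfl | hγb
    · exact ⟨β, rfl⟩
    · rw [Finset.mem_singleton] at hγb
      subst hγb
      exact ⟨α, by rw [Finset.pair_comm]⟩
  have hcolor : ∀ e ∈ (Walk.cons hxy' p).edges, c e = c s(x, y) ∨ c e = η := by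
    intro e he
    have : c e ∈ (W0.edges.map c).toFinset := by
      rw [← hT2, List.mem_toFinset, List.mem_map]; exact ⟨e, he, rfl⟩
    rw [hTeq', Finset.mem_insert, Finset.mem_singleton] at this
    rw [hγc]
    exact this
  obtain ⟨a, w', v', hxa, hyv, hax, hay, hv'x, hwx, hcxa, hcyv, haw, hcaw⟩ :=
    aux_extract hxy' p hW2 c hcprop hcolor
  have hne1 : s(x, a) ≠ s(x, y) := by
    intro hm; rw [Sym2.eq_iff] at hm
    rcases hm with ⟨-, h⟩ | ⟨h, -⟩
    exacts [hay h, hxy'.ne h]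
  have hne2 : s(y, v') ≠ s(x, y) := by
    intro hm; rw [Sym2.eq_iff] at hm
    rcases hm with ⟨h, -⟩ | ⟨-, h⟩
    exacts [hxy'.ne' h, hv'x h]
  have hne3 : s(a, w') ≠ s(x, y) := by
    intro hm; rw [Sym2.eq_iff] at hm
    rcases hm with ⟨h, -⟩ | ⟨h, -⟩
    exacts [hax h, hay h]
  refine ⟨a, w', ⟨?_, v', ?_, ?_⟩, haw, hwx, ?_⟩
  · rw [deleteEdges_adj]
    exact ⟨hxa, by simpa using hne1⟩
  · rw [deleteEdges_adj]
    exact ⟨hyv, by simpa using hne2⟩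
  · have e1 : g s(x, a) = c s(x, a) := by rw [hcdef, Function.update_of_ne hne1]
    have e2 : g s(y, v') = c s(y, v') := by rw [hcdef, Function.update_of_ne hne2]
    rw [e1, e2, hcxa, hcyv]
  · have e3 : g s(a, w') = c s(a, w') := by rw [hcdef, Function.update_of_ne hne3]
    rw [e3, hcaw, hγc]

end MyKey

theorem invalid_candidate_count_bound {V : Type*} [Fintype V] [DecidableEq V]
    (G : SimpleGraph V) [DecidableRel G.Adj] (k q : ℕ) {x y : V} (hxy : G.Adj x y)
    (hdx : G.degree x ≤ k) (g : Sym2 V → ℕ)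
    (hg : IsAcyclicEdgeColoring (G.deleteEdges {s(x, y)}) g)
    (hS : ({u : V | (G.deleteEdges {s(x, y)}).Adj x u ∧
      ∃ v', (G.deleteEdges {s(x, y)}).Adj y v' ∧ g s(x, u) = g s(y, v')}).ncard = q) :
    ({γ : ℕ | (∀ w, (G.deleteEdges {s(x, y)}).Adj x w → g s(x, w) ≠ γ) ∧
        (∀ w, (G.deleteEdges {s(x, y)}).Adj y w → g s(y, w) ≠ γ) ∧
        ¬ IsAcyclicEdgeColoring G (Function.update g s(x, y) γ)}).ncard
      ≤ q * (G.maxDegree - 1) := by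
  classical
  set D := G.deleteEdges {s(x, y)} with hD
  set Sset : Set V := {u : V | D.Adj x u ∧ ∃ v', D.Adj y v' ∧ g s(x, u) = g s(y, v')} with hSset
  have hfin : Sset.Finite := Set.toFinite _
  set S' : Finset V := hfin.toFinset with hS'
  have hScard : S'.card = q := by
    rw [← hS, Set.ncard_eq_toFinset_card Sset hfin]
  set P : Finset (V × V) :=
    S'.biUnion (fun u => (G.neighborFinset u \ {x}).image (fun w => (u, w))) with hP
  have hsub : {γ : ℕ | (∀ w, D.Adj x w → g s(x, w) ≠ γ) ∧
      (∀ w, D.Adj y w → g s(y, w) ≠ γ) ∧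
      ¬ IsAcyclicEdgeColoring G (Function.update g s(x, y) γ)} ⊆
      ↑(P.image (fun uw : V × V => g s(uw.1, uw.2))) := by
    rintro γ ⟨hcx, hcy, hnot⟩
    obtain ⟨u, w, hu, huw, hwx, hguw⟩ := aux_key hxy g hg hcx hcy hnot
    rw [Finset.mem_coe, Finset.mem_image]
    refine ⟨(u, w), ?_, hguw⟩
    rw [hP, Finset.mem_biUnion]
    refine ⟨u, ?_, ?_⟩
    · rw [hS', Set.Finite.mem_toFinset]; exact hu
    · rw [Finset.mem_image]
      refine ⟨w, ?_, rfl⟩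
      rw [Finset.mem_sdiff, mem_neighborFinset, Finset.mem_singleton]
      exact ⟨huw, hwx⟩
  calc ({γ : ℕ | (∀ w, D.Adj x w → g s(x, w) ≠ γ) ∧
      (∀ w, D.Adj y w → g s(y, w) ≠ γ) ∧
      ¬ IsAcyclicEdgeColoring G (Function.update g s(x, y) γ)}).ncard
      ≤ (↑(P.image (fun uw : V × V => g s(uw.1, uw.2))) : Set ℕ).ncard :=
        Set.ncard_le_ncard hsub (Finset.finite_toSet _)
    _ = (P.image (fun uw : V × V => g s(uw.1, uw.2))).card := Set.ncard_coe_finset _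
    _ ≤ P.card := Finset.card_image_le
    _ ≤ ∑ u ∈ S', ((G.neighborFinset u \ {x}).image (fun w => (u, w))).card :=
        Finset.card_biUnion_le
    _ ≤ ∑ _u ∈ S', (G.maxDegree - 1) := by
        apply Finset.sum_le_sum
        intro u hu
        calc ((G.neighborFinset u \ {x}).image (fun w => (u, w))).card
            ≤ (G.neighborFinset u \ {x}).card := Finset.card_image_le
          _ = G.degree u - 1 := by
              rw [Finset.card_sdiff_of_subset, Finset.card_singleton, ← card_neighborFinset_eq_degree]
              rw [Finset.singleton_subset_iff, mem_neighborFinset]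
              have hu' : u ∈ Sset := by
                rw [hS', Set.Finite.mem_toFinset] at hu; exact hu
              exact ((deleteEdges_adj).mp hu'.1).1.symm
          _ ≤ G.maxDegree - 1 := Nat.sub_le_sub_right (G.degree_le_maxDegree u) 1
    _ = S'.card * (G.maxDegree - 1) := by rw [Finset.sum_const, smul_eq_mul]
    _ = q * (G.maxDegree - 1) := by rw [hScard]
end

section
/- Let f be an acyclic proper edge coloring of a graph G, let xy be an uncolored edge, and let γ be a candidate color for xy such that for every color η appearing both on an edge at x and an edge at y, there is no (η,γ)-maximal bichromatic path from x to y ending at y with an edge colored η. Then assigning γ to xy yields an acyclic proper edge coloring of G. -/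
open SimpleGraph

section AuxXYZ
variable {V : Type*} {H : SimpleGraph V}

lemma auxXYZ_edges_ne_nil {u v : V} (hne : u ≠ v) (q : H.Walk u v) : q.edges ≠ [] := by
  cases q with
  | nil => exact absurd rfl hne
  | cons h p => simp

lemma auxXYZ_head_edge {u v : V} (q : H.Walk u v) (hne : q.edges ≠ []) :
    ∃ z, H.Adj u z ∧ z ∈ q.support ∧ q.edges.head hne = s(u, z) := by
  cases q with
  | nil => simp at hne
  | cons h p =>
    exact ⟨_, h, by simp [Walk.support_cons, p.start_mem_support], rfl⟩

lemma auxXYZ_last_edge {u v : V} (q : H.Walk u v) (hne : q.edges ≠ []) :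
    ∃ z, H.Adj v z ∧ z ∈ q.support ∧ q.edges.getLast hne = s(v, z) := by
  have hne' : q.reverse.edges ≠ [] := by
    rw [Walk.edges_reverse]; simpa using hne
  obtain ⟨z, hadj, hsup, hhead⟩ := auxXYZ_head_edge q.reverse hne'
  refine ⟨z, hadj, by simpa [Walk.support_reverse] using hsup, ?_⟩
  have h1 : q.reverse.edges.head? = some s(v, z) := by
    rw [← hhead]; exact (List.head?_eq_head hne')
  rw [Walk.edges_reverse, List.head?_reverse] at h1
  exact (List.getLast_eq_iff_getLast?_eq_some hne).mpr h1

lemma auxXYZ_start_edge {x b y : V} {r : H.Walk x b} (hr : r.IsPath) (he : s(x, y) ∈ r.edges) :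
    ∃ (had : H.Adj x y) (r₀ : H.Walk y b), r = Walk.cons had r₀ := by
  cases r with
  | nil => simp at he
  | cons h p =>
    rw [Walk.cons_isPath_iff] at hr
    simp only [Walk.edges_cons, List.mem_cons] at he
    rcases he with he | he
    · obtain rfl := Sym2.congr_right.mp he
      exact ⟨h, p, rfl⟩
    · exact absurd (p.fst_mem_support_of_mem_edges he) hr.2

lemma auxXYZ_cycle_path {x y : V} (_hne : x ≠ y) {c : H.Walk x x} (hc : c.IsCycle)
    (hmem : s(x, y) ∈ c.edges) :
    ∃ q : H.Walk x y, q.IsPath ∧ c.edges.Perm (s(x, y) :: q.edges) := by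
  cases c with
  | nil => simp at hmem
  | cons h p =>
    rw [Walk.cons_isCycle_iff] at hc
    simp only [Walk.edges_cons, List.mem_cons] at hmem
    rcases hmem with hmem | hmem
    · obtain rfl := Sym2.congr_right.mp hmem
      exact ⟨p.reverse, hc.1.reverse, by
        rw [Walk.edges_cons, Walk.edges_reverse]
        exact List.Perm.cons _ (List.reverse_perm _).symm⟩
    · have hrev : s(x, y) ∈ p.reverse.edges := by
        rw [Walk.edges_reverse]; simpa using hmem
      obtain ⟨had, r₀, hr⟩ := auxXYZ_start_edge hc.1.reverse hrev
      have hr₀ : r₀.IsPath ∧ x ∉ r₀.support := by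
        have := hc.1.reverse
        rw [hr, Walk.cons_isPath_iff] at this
        exact this
      refine ⟨Walk.cons h r₀.reverse, ?_, ?_⟩
      · rw [Walk.cons_isPath_iff]
        exact ⟨hr₀.1.reverse, by simpa [Walk.support_reverse] using hr₀.2⟩
      · have h1 : p.edges.Perm (s(x, y) :: r₀.edges) := by
          have h2 := (List.reverse_perm p.edges).symm
          rwa [← Walk.edges_reverse, hr, Walk.edges_cons] at h2
        simp only [Walk.edges_cons, Walk.edges_reverse]
        exact (h1.cons _).trans ((List.Perm.swap _ _ _).trans
          (((List.reverse_perm _).symm.cons _).cons _))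

end AuxXYZ

theorem valid_of_no_critical_path {V : Type*} [DecidableEq V] (G : SimpleGraph V)
    (g : Sym2 V → ℕ) {x y : V} (hxy : G.Adj x y)
    (hg : IsAcyclicEdgeColoring (G.deleteEdges {s(x, y)}) g) (γ : ℕ)
    (hcand₁ : ∀ w, (G.deleteEdges {s(x, y)}).Adj x w → g s(x, w) ≠ γ)
    (hcand₂ : ∀ w, (G.deleteEdges {s(x, y)}).Adj y w → g s(y, w) ≠ γ)
    (hnocrit : ∀ η : ℕ, (∃ w, (G.deleteEdges {s(x, y)}).Adj x w ∧ g s(x, w) = η) →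
      (∃ w, (G.deleteEdges {s(x, y)}).Adj y w ∧ g s(y, w) = η) →
      ¬ ∃ p : (G.deleteEdges {s(x, y)}).Walk x y,
        IsCriticalPath (G.deleteEdges {s(x, y)}) g η γ p) :
    IsAcyclicEdgeColoring G (Function.update g s(x, y) γ) := by
  set G' := G.deleteEdges {s(x, y)} with hG'
  have hnexy : x ≠ y := hxy.ne
  set f := Function.update g s(x, y) γ with hf
  have hfxy : f s(x, y) = γ := Function.update_self _ _ _
  have hfe : ∀ e : Sym2 V, e ≠ s(x, y) → f e = g e := fun e he => Function.update_of_ne he _ _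
  have hadj' : ∀ {u v : V}, G.Adj u v → s(u, v) ≠ s(x, y) → G'.Adj u v := by
    intro u v h hne'
    rw [hG', SimpleGraph.deleteEdges_adj]
    exact ⟨h, by simpa using hne'⟩
  have hproper : IsProperEdgeColoring G f := by
    intro u v w huv huw hvw
    by_cases h1 : s(u, v) = s(x, y) <;> by_cases h2 : s(u, w) = s(x, y)
    · exact absurd (Sym2.congr_right.mp (h1.trans h2.symm)) hvw
    · rw [h1, hfxy, hfe _ h2]
      rcases Sym2.eq_iff.mp h1 with ⟨rfl, rfl⟩ | ⟨rfl, rfl⟩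
      · exact fun hcon => hcand₁ w (hadj' huw h2) hcon.symm
      · exact fun hcon => hcand₂ w (hadj' huw h2) hcon.symm
    · rw [h2, hfxy, hfe _ h1]
      rcases Sym2.eq_iff.mp h2 with ⟨rfl, rfl⟩ | ⟨rfl, rfl⟩
      · exact hcand₁ v (hadj' huv h1)
      · exact hcand₂ v (hadj' huv h1)
    · rw [hfe _ h1, hfe _ h2]
      exact hg.1 (hadj' huv h1) (hadj' huw h2) hvw
  refine ⟨hproper, ?_⟩
  intro v c hc hcard
  by_cases hmem : s(x, y) ∈ c.edges
  · -- rotate cycle to x and remove the edge xy, getting a path q : G.Walk x y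
    have hx : x ∈ c.support := Walk.fst_mem_support_of_mem_edges c hmem
    have hc2 : (c.rotate x hx).IsCycle := hc.rotate hx
    have hperm0 : (c.rotate x hx).edges.Perm c.edges := (c.rotate_edges x hx).perm
    have hmem2 : s(x, y) ∈ (c.rotate x hx).edges := hperm0.mem_iff.mpr hmem
    obtain ⟨q, hq, hqperm⟩ := auxXYZ_cycle_path hnexy hc2 hmem2
    have hcperm : c.edges.Perm (s(x, y) :: q.edges) := hperm0.symm.trans hqperm
    have hnodup : ((s(x, y) : Sym2 V) :: q.edges).Nodup :=
      hcperm.nodup_iff.mp hc.isCircuit.isTrail.edges_nodup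
    have hxy_notin : s(x, y) ∉ q.edges := (List.nodup_cons.mp hnodup).1
    have hq_ne_xy : ∀ e ∈ q.edges, e ≠ s(x, y) := fun e he h => hxy_notin (h ▸ he)
    have hqG' : ∀ e, e ∈ q.edges → e ∉ ({s(x, y)} : Set (Sym2 V)) := by
      intro e he
      simpa using hq_ne_xy e he
    have hqnil : q.edges ≠ [] := auxXYZ_edges_ne_nil hnexy q
    obtain ⟨z, hxz, hzsup, hhead⟩ := auxXYZ_head_edge q hqnil
    obtain ⟨z', hyz', hz'sup, hlast⟩ := auxXYZ_last_edge q hqnil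
    have hxzG' : G'.Adj x z :=
      hadj' hxz (hq_ne_xy _ (hhead ▸ List.head_mem hqnil))
    have hyz'G' : G'.Adj y z' := by
      have hm : s(y, z') ∈ q.edges := hlast ▸ List.getLast_mem hqnil
      exact hadj' hyz' (hq_ne_xy _ hm)
    set η := g s(x, z) with hηdef
    have hη_ne : η ≠ γ := hcand₁ z hxzG'
    -- the color set of the cycle
    have hmapq : q.edges.map f = q.edges.map g :=
      List.map_congr_left fun e he => hfe e (hq_ne_xy e he)
    have hSz : (c.edges.map f).toFinset = insert γ (q.edges.map g).toFinset := by
      rw [List.toFinset_eq_of_perm _ _ (hcperm.map f)]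
      simp only [List.map_cons, List.toFinset_cons, hfxy, hmapq]
    have hpairS : ({γ, η} : Finset ℕ) = (c.edges.map f).toFinset := by
      apply Finset.eq_of_subset_of_card_le
      · intro a ha
        rcases Finset.mem_insert.mp ha with rfl | ha
        · rw [hSz]; exact Finset.mem_insert_self _ _
        · rw [Finset.mem_singleton] at ha
          subst ha
          rw [hSz]
          apply Finset.mem_insert_of_mem
          rw [List.mem_toFinset]
          exact List.mem_map_of_mem (f := g) (hhead ▸ List.head_mem hqnil)
      · rw [hcard, Finset.card_pair (Ne.symm hη_ne)]
    have hcol : ∀ e ∈ q.edges, g e = η ∨ g e = γ := by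
      intro e he
      have h1 : g e ∈ ({γ, η} : Finset ℕ) := by
        rw [hpairS, hSz]
        exact Finset.mem_insert_of_mem (List.mem_toFinset.mpr (List.mem_map_of_mem (f := g) he))
      rcases Finset.mem_insert.mp h1 with h | h
      · exact Or.inr h
      · exact Or.inl (Finset.mem_singleton.mp h)
    have hη_last : g s(y, z') = η := by
      rcases hcol _ (hlast ▸ List.getLast_mem hqnil) with h | h
      · exact h
      · exact absurd h (hcand₂ z' hyz'G')
    -- build the critical path in G'
    refine hnocrit η ⟨z, hxzG', rfl⟩ ⟨z', hyz'G', hη_last⟩ ⟨q.toDeleteEdges _ hqG', ?_⟩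
    have hq'edges : (q.toDeleteEdges _ hqG').edges = q.edges := q.edges_transfer _
    have hq'support : (q.toDeleteEdges _ hqG').support = q.support := q.support_transfer _
    have hq'path : (q.toDeleteEdges _ hqG').IsPath := hq.transfer _
    have hbi : ∀ e ∈ (q.toDeleteEdges _ hqG').edges, g e = η ∨ g e = γ := by
      rw [hq'edges]; exact hcol
    refine ⟨⟨⟨hq'path, hbi⟩, ?_, ?_⟩, ?_⟩
    · -- no extension at x
      rintro ⟨w, hwx, hwpath, hwcol⟩
      have hw_ne : w ∉ (q.toDeleteEdges _ hqG').support :=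
        ((Walk.cons_isPath_iff _ _).mp hwpath).2
      have hwz : w ≠ z := fun h => hw_ne (h ▸ (hq'support ▸ hzsup))
      have hcw := hwcol s(w, x) (by simp)
      rcases hcw with h | h
      · refine hg.1 hwx.symm hxzG' hwz ?_
        rw [Sym2.eq_swap (a := x) (b := w)]
        exact h.trans hηdef
      · exact hcand₁ w hwx.symm (by rwa [Sym2.eq_swap (a := x) (b := w)])
    · -- no extension at y
      rintro ⟨w, hyw, hwpath, hwcol⟩
      have h1 := hwpath.reverse
      rw [Walk.reverse_concat, Walk.cons_isPath_iff] at h1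
      have hw_ne : w ∉ (q.toDeleteEdges _ hqG').support := by
        intro hmem'
        exact h1.2 (by rwa [Walk.support_reverse, List.mem_reverse])
      have hwz' : w ≠ z' := fun h => hw_ne (h ▸ (hq'support ▸ hz'sup))
      have hcw := hwcol s(y, w) (by simp [Walk.edges_concat])
      rcases hcw with h | h
      · exact hg.1 hyw hyz'G' hwz' (h.trans hη_last.symm)
      · exact hcand₂ w hyw h
    · -- head and last edges colored η
      have hq'nil : (q.toDeleteEdges _ hqG').edges ≠ [] := by rw [hq'edges]; exact hqnil
      refine ⟨hq'nil, ?_, ?_⟩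
      · have : (q.toDeleteEdges _ hqG').edges.head hq'nil = s(x, z) := by
          rw [List.head_eq_iff_head?_eq_some]
          rw [hq'edges, ← hhead]
          exact List.head?_eq_head hqnil
        rw [this]
      · have : (q.toDeleteEdges _ hqG').edges.getLast hq'nil = s(y, z') := by
          rw [List.getLast_eq_iff_getLast?_eq_some, hq'edges, ← hlast]
          exact List.getLast?_eq_getLast hqnil
        rw [this]; exact hη_last
  · -- the edge xy is not in the cycle: transfer to G'
    have hall : ∀ e, e ∈ c.edges → e ∉ ({s(x, y)} : Set (Sym2 V)) := by
      intro e he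
      simp only [Set.mem_singleton_iff]
      exact fun h => hmem (h ▸ he)
    refine hg.2 v (c.toDeleteEdges _ hall) (hc.transfer _) ?_
    have hmapc : c.edges.map g = c.edges.map f :=
      List.map_congr_left fun e he => (hfe e fun h => hmem (h ▸ he)).symm
    rw [c.edges_transfer _, hmapc]
    exact hcard
end
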